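/- arXiv:2109.02569 — 12 statements merged into one kernel-verified Lean document; each statement's English description precedes it below -/
import Mathlib

section
/- Let H be a 3-partite 3-uniform hypergraph in which every two edges intersect. Then H satisfies one of the following: (a) all edges of H share a common vertex; or (b) there exist vertices r, b, g, one in each part, such that every edge of H contains at least two of {r, b, g}; or (c) the edges of H are exactly the four edges {r1,b1,g2}, {r1,b2,g1}, {r2,b1,g1}, {r2,b2,g2} for some vertices r1,r2 in the first part, b1,b2 in the second part, g1,g2 in the third part. -/
set_option maxHeartbeats 1000000


/-- Membership of a vertex (of one of the three parts) in an edge of a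
3-partite 3-uniform hypergraph, with edges encoded as triples. -/
def Mem3 {R B G : Type*} (v : R ⊕ B ⊕ G) (e : R × B × G) : Prop :=
  match v with
  | Sum.inl r => e.1 = r
  | Sum.inr (Sum.inl b) => e.2.1 = b
  | Sum.inr (Sum.inr g) => e.2.2 = g

/-- Two edges of a 3-partite 3-uniform hypergraph intersect. -/
def Intersect3 {R B G : Type*} (e f : R × B × G) : Prop :=
  e.1 = f.1 ∨ e.2.1 = f.2.1 ∨ e.2.2 = f.2.2

/-- Conclusion of the classification, as a predicate on the edge set. -/
def Conc {X Y Z : Type*} (F : Set (X × Y × Z)) : Prop :=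
  (∃ v : X ⊕ Y ⊕ Z, ∀ e ∈ F, Mem3 v e) ∨
  (∃ (r : X) (b : Y) (g : Z), ∀ e ∈ F,
    (e.1 = r ∧ e.2.1 = b) ∨ (e.1 = r ∧ e.2.2 = g) ∨ (e.2.1 = b ∧ e.2.2 = g)) ∨
  (∃ (r1 r2 : X) (b1 b2 : Y) (g1 g2 : Z), r1 ≠ r2 ∧ b1 ≠ b2 ∧ g1 ≠ g2 ∧
    F = {(r1, b1, g2), (r1, b2, g1), (r2, b1, g1), (r2, b2, g2)})

lemma quad {X Y Z : Type*} (F : Set (X × Y × Z))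
    (hint : ∀ e ∈ F, ∀ f ∈ F, Intersect3 e f)
    (r1 r2 : X) (b1 b2 : Y) (g1 g2 : Z)
    (he : (r1,b1,g2) ∈ F) (hf : (r1,b2,g1) ∈ F) (hk : (r2,b1,g1) ∈ F) (hh : (r2,b2,g2) ∈ F)
    (hr : r1 ≠ r2) (hb : b1 ≠ b2) (hg : g1 ≠ g2) :
    F = {(r1,b1,g2),(r1,b2,g1),(r2,b1,g1),(r2,b2,g2)} := by
  ext ⟨x,y,z⟩
  simp only [Set.mem_insert_iff, Set.mem_singleton_iff, Prod.mk.injEq]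
  constructor
  · intro hm
    have h1 : x = r1 ∨ y = b1 ∨ z = g2 := hint _ hm _ he
    have h2 : x = r1 ∨ y = b2 ∨ z = g1 := hint _ hm _ hf
    have h3 : x = r2 ∨ y = b1 ∨ z = g1 := hint _ hm _ hk
    have h4 : x = r2 ∨ y = b2 ∨ z = g2 := hint _ hm _ hh
    clear hint he hf hk hh
    rcases h1 with h1|h1|h1 <;> rcases h2 with h2|h2|h2 <;> rcases h3 with h3|h3|h3 <;>
      rcases h4 with h4|h4|h4 <;> simp_all
  · rintro (⟨rfl,rfl,rfl⟩|⟨rfl,rfl,rfl⟩|⟨rfl,rfl,rfl⟩|⟨rfl,rfl,rfl⟩) <;> assumption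

lemma center {X Y Z : Type*} (F : Set (X × Y × Z))
    (hint : ∀ e ∈ F, ∀ f ∈ F, Intersect3 e f)
    (r1 r2 : X) (b1 b2 : Y) (g1 g2 : Z)
    (he : (r1,b1,g2) ∈ F) (hf : (r1,b2,g1) ∈ F) (hk : (r2,b1,g1) ∈ F)
    (hr : r1 ≠ r2) (hb : b1 ≠ b2) (hg : g1 ≠ g2) : Conc F := by
  by_cases hc : ∀ m ∈ F, (m.1 = r1 ∧ m.2.1 = b1) ∨ (m.1 = r1 ∧ m.2.2 = g1) ∨
      (m.2.1 = b1 ∧ m.2.2 = g1)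
  · exact Or.inr (Or.inl ⟨r1, b1, g1, hc⟩)
  · push_neg at hc
    obtain ⟨⟨x,y,z⟩, hmF, hm⟩ := hc
    have h1 : x = r1 ∨ y = b1 ∨ z = g2 := hint _ hmF _ he
    have h2 : x = r1 ∨ y = b2 ∨ z = g1 := hint _ hmF _ hf
    have h3 : x = r2 ∨ y = b1 ∨ z = g1 := hint _ hmF _ hk
    have hx : x = r2 ∧ y = b2 ∧ z = g2 := by
      clear hint he hf hk hmF
      rcases h1 with h|h|h <;> rcases h2 with h'|h'|h' <;> rcases h3 with h''|h''|h'' <;>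
        simp_all
    obtain ⟨hx1, hx2, hx3⟩ := hx
    rw [hx1, hx2, hx3] at hmF
    exact Or.inr (Or.inr ⟨r1, r2, b1, b2, g1, g2, hr, hb, hg,
      quad F hint r1 r2 b1 b2 g1 g2 he hf hk hmF hr hb hg⟩)

/-- Key lemma: a pair of edges agreeing exactly in the first coordinate. -/
lemma key {X Y Z : Type*} (F : Set (X × Y × Z))
    (hint : ∀ e ∈ F, ∀ f ∈ F, Intersect3 e f)
    (r1 : X) (b1 b2 : Y) (g1 g2 : Z)
    (he : (r1,b1,g2) ∈ F) (hf : (r1,b2,g1) ∈ F)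
    (hb : b1 ≠ b2) (hg : g1 ≠ g2) : Conc F := by
  by_cases h1 : ∀ m ∈ F, m.1 = r1
  · exact Or.inl ⟨Sum.inl r1, h1⟩
  · push_neg at h1
    obtain ⟨⟨x,y,z⟩, hmF, hx⟩ := h1
    have h2 : x = r1 ∨ y = b1 ∨ z = g2 := hint _ hmF _ he
    have h3 : x = r1 ∨ y = b2 ∨ z = g1 := hint _ hmF _ hf
    rcases h2 with h2|h2|h2
    · exact absurd h2 hx
    · rcases h3 with h3|h3|h3
      · exact absurd h3 hx
      · rw [h2] at h3; exact absurd h3 hb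
      · rw [h2, h3] at hmF
        exact center F hint r1 x b1 b2 g1 g2 he hf hmF (Ne.symm hx) hb hg
    · rcases h3 with h3|h3|h3
      · exact absurd h3 hx
      · rw [h2, h3] at hmF
        exact center F hint r1 x b2 b1 g2 g1 hf he hmF (Ne.symm hx) hb.symm hg.symm
      · rw [h2] at h3; exact absurd h3 hg.symm

lemma hint_shift {X Y Z : Type*} (F : Set (X × Y × Z))
    (hint : ∀ e ∈ F, ∀ f ∈ F, Intersect3 e f) :
    ∀ e ∈ (fun p : X × Y × Z => (p.2.1, p.2.2, p.1)) '' F,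
      ∀ f ∈ (fun p : X × Y × Z => (p.2.1, p.2.2, p.1)) '' F, Intersect3 e f := by
  rintro _ ⟨e, heF, rfl⟩ _ ⟨f, hfF, rfl⟩
  rcases hint e heF f hfF with h | h | h
  · exact Or.inr (Or.inr h)
  · exact Or.inl h
  · exact Or.inr (Or.inl h)

lemma conc_shift {X Y Z : Type*} (F : Set (X × Y × Z))
    (h : Conc ((fun p : X × Y × Z => (p.2.1, p.2.2, p.1)) '' F)) : Conc F := by
  obtain h | h | h := h
  · obtain ⟨v, hv⟩ := h
    rcases v with y | z | x
    · exact Or.inl ⟨Sum.inr (Sum.inl y), fun e he => hv _ ⟨e, he, rfl⟩⟩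
    · exact Or.inl ⟨Sum.inr (Sum.inr z), fun e he => hv _ ⟨e, he, rfl⟩⟩
    · exact Or.inl ⟨Sum.inl x, fun e he => hv _ ⟨e, he, rfl⟩⟩
  · obtain ⟨y0, z0, x0, hh⟩ := h
    refine Or.inr (Or.inl ⟨x0, y0, z0, fun e he => ?_⟩)
    have := hh _ ⟨e, he, rfl⟩
    tauto
  · obtain ⟨a1, a2, b1, b2, c1, c2, ha, hbb, hcc, hE⟩ := h
    refine Or.inr (Or.inr ⟨c1, c2, a1, a2, b1, b2, hcc, ha, hbb, ?_⟩)
    ext ⟨x, y, z⟩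
    have hmem : (x,y,z) ∈ F ↔
        (y,z,x) ∈ (fun p : X × Y × Z => (p.2.1, p.2.2, p.1)) '' F := by
      constructor
      · intro hh2; exact ⟨_, hh2, rfl⟩
      · rintro ⟨⟨px,py,pz⟩, hp, heq⟩
        obtain ⟨h1, h2, h3⟩ : py = y ∧ pz = z ∧ px = x := by
          simpa [Prod.ext_iff] using heq
        subst h1; subst h2; subst h3; exact hp
    rw [hmem, hE]
    simp only [Set.mem_insert_iff, Set.mem_singleton_iff, Prod.mk.injEq]
    tauto

/-- Pair of edges agreeing exactly in the second coordinate. -/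
lemma key2 {X Y Z : Type*} (F : Set (X × Y × Z))
    (hint : ∀ e ∈ F, ∀ f ∈ F, Intersect3 e f)
    (r1 r2 : X) (b1 : Y) (g1 g2 : Z)
    (he : (r1,b1,g1) ∈ F) (hf : (r2,b1,g2) ∈ F)
    (hr : r1 ≠ r2) (hg : g1 ≠ g2) : Conc F := by
  apply conc_shift
  exact key _ (hint_shift F hint) b1 g1 g2 r2 r1
    (Set.mem_image_of_mem _ he) (Set.mem_image_of_mem _ hf) hg (Ne.symm hr)

/-- Pair of edges agreeing exactly in the third coordinate. -/
lemma key3 {X Y Z : Type*} (F : Set (X × Y × Z))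
    (hint : ∀ e ∈ F, ∀ f ∈ F, Intersect3 e f)
    (r1 r2 : X) (b1 b2 : Y) (g1 : Z)
    (he : (r1,b1,g1) ∈ F) (hf : (r2,b2,g1) ∈ F)
    (hr : r1 ≠ r2) (hb : b1 ≠ b2) : Conc F := by
  apply conc_shift
  apply conc_shift
  exact key _ (hint_shift _ (hint_shift F hint)) g1 r1 r2 b2 b1
    (Set.mem_image_of_mem _ (Set.mem_image_of_mem _ he))
    (Set.mem_image_of_mem _ (Set.mem_image_of_mem _ hf)) hr (Ne.symm hb)

theorem stmt_0 {R B G : Type*} (E : Set (R × B × G)) (hne : E.Nonempty)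
    (hint : ∀ e ∈ E, ∀ f ∈ E, Intersect3 e f) :
    (∃ v : R ⊕ B ⊕ G, ∀ e ∈ E, Mem3 v e) ∨
    (∃ (r : R) (b : B) (g : G), ∀ e ∈ E,
      (e.1 = r ∧ e.2.1 = b) ∨ (e.1 = r ∧ e.2.2 = g) ∨ (e.2.1 = b ∧ e.2.2 = g)) ∨
    (∃ (r1 r2 : R) (b1 b2 : B) (g1 g2 : G), r1 ≠ r2 ∧ b1 ≠ b2 ∧ g1 ≠ g2 ∧
      E = {(r1, b1, g2), (r1, b2, g1), (r2, b1, g1), (r2, b2, g2)}) := by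
  suffices h : Conc E from h
  obtain ⟨⟨r0, b0, g0⟩, he0⟩ := hne
  by_cases hA : ∀ m ∈ E, m.1 = r0
  · exact Or.inl ⟨Sum.inl r0, hA⟩
  push_neg at hA
  obtain ⟨⟨x, y, z⟩, haE, hax⟩ := hA
  have hInt : x = r0 ∨ y = b0 ∨ z = g0 := hint _ haE _ he0
  by_cases hy : y = b0
  · rw [hy] at haE
    by_cases hz : z = g0
    · rw [hz] at haE
      -- double agreement: e0 = (r0,b0,g0), a = (x,b0,g0), x ≠ r0
      by_cases hB : ∀ m ∈ E, m.2.1 = b0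
      · exact Or.inl ⟨Sum.inr (Sum.inl b0), hB⟩
      · push_neg at hB
        obtain ⟨⟨u, v, w⟩, hcE, hcv⟩ := hB
        have hc1 : u = r0 ∨ v = b0 ∨ w = g0 := hint _ hcE _ he0
        have hc2 : u = x ∨ v = b0 ∨ w = g0 := hint _ hcE _ haE
        have hw : w = g0 := by
          clear hint he0 haE hcE
          rcases hc1 with h|h|h <;> rcases hc2 with h'|h'|h' <;> simp_all
        rw [hw] at hcE
        by_cases hu : u = r0
        · rw [hu] at hcE
          exact key3 E hint x r0 b0 v g0 haE hcE hax (Ne.symm hcv)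
        · exact key3 E hint r0 u b0 v g0 he0 hcE (Ne.symm hu) (Ne.symm hcv)
    · exact key2 E hint r0 x b0 g0 z he0 haE (Ne.symm hax) (Ne.symm hz)
  · have hz : z = g0 := by
      rcases hInt with h|h|h
      exacts [absurd h hax, absurd h hy, h]
    rw [hz] at haE
    exact key3 E hint r0 x b0 y g0 he0 haE (Ne.symm hax) (Ne.symm hy)
end

section
/- Every 3-partite 3-uniform hypergraph in which any two edges intersect has a vertex cover of size at most 2. -/
theorem stmt_1 {R B G : Type*} (E : Set (R × B × G))
    (hint : ∀ e ∈ E, ∀ f ∈ E, Intersect3 e f) :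
    ∃ S : Finset (R ⊕ B ⊕ G), S.card ≤ 2 ∧ ∀ e ∈ E, ∃ v ∈ S, Mem3 v e := by
  classical
  rcases Set.eq_empty_or_nonempty E with hE | ⟨e0, he0⟩
  · exact ⟨∅, by simp, by simp [hE]⟩
  obtain ⟨r0, b0, g0⟩ := e0
  by_cases hA : ∀ e ∈ E, e.1 = r0 ∨ e.2.1 = b0
  · refine ⟨{Sum.inl r0, Sum.inr (Sum.inl b0)}, (Finset.card_insert_le _ _).trans (by simp), ?_⟩
    intro e he
    rcases hA e he with h | h
    · exact ⟨Sum.inl r0, by simp, h⟩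
    · exact ⟨Sum.inr (Sum.inl b0), by simp, h⟩
  push_neg at hA
  obtain ⟨f1, hf1E, hr1, hb1⟩ := hA
  have hg1 : f1.2.2 = g0 := by
    rcases hint f1 hf1E (r0, b0, g0) he0 with h | h | h
    · exact absurd h hr1
    · exact absurd h hb1
    · exact h
  by_cases hB : ∀ e ∈ E, e.1 = r0 ∨ e.2.2 = g0
  · refine ⟨{Sum.inl r0, Sum.inr (Sum.inr g0)}, (Finset.card_insert_le _ _).trans (by simp), ?_⟩
    intro e he
    rcases hB e he with h | h
    · exact ⟨Sum.inl r0, by simp, h⟩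
    · exact ⟨Sum.inr (Sum.inr g0), by simp, h⟩
  push_neg at hB
  obtain ⟨f2, hf2E, hr2, hg2⟩ := hB
  have hb2 : f2.2.1 = b0 := by
    rcases hint f2 hf2E (r0, b0, g0) he0 with h | h | h
    · exact absurd h hr2
    · exact h
    · exact absurd h hg2
  have hrr : f2.1 = f1.1 := by
    rcases hint f2 hf2E f1 hf1E with h | h | h
    · exact h
    · exact absurd (h.symm.trans hb2) hb1
    · exact absurd (hg1 ▸ h) hg2
  by_cases hC : ∀ e ∈ E, e.2.1 = b0 ∨ e.2.2 = g0
  · refine ⟨{Sum.inr (Sum.inl b0), Sum.inr (Sum.inr g0)},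
      (Finset.card_insert_le _ _).trans (by simp), ?_⟩
    intro e he
    rcases hC e he with h | h
    · exact ⟨Sum.inr (Sum.inl b0), by simp, h⟩
    · exact ⟨Sum.inr (Sum.inr g0), by simp, h⟩
  push_neg at hC
  obtain ⟨f3, hf3E, hb3, hg3⟩ := hC
  have hr3 : f3.1 = r0 := by
    rcases hint f3 hf3E (r0, b0, g0) he0 with h | h | h
    · exact h
    · exact absurd h hb3
    · exact absurd h hg3
  have hbb : f3.2.1 = f1.2.1 := by
    rcases hint f3 hf3E f1 hf1E with h | h | h
    · exact absurd (hr3 ▸ h.symm) hr1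
    · exact h
    · exact absurd (hg1 ▸ h) hg3
  have hgg : f3.2.2 = f2.2.2 := by
    rcases hint f3 hf3E f2 hf2E with h | h | h
    · exact absurd (hrr.symm.trans (h.symm.trans hr3)) hr1
    · exact absurd ((hbb ▸ h).trans hb2) hb1
    · exact h
  refine ⟨{Sum.inl r0, Sum.inl f1.1}, (Finset.card_insert_le _ _).trans (by simp), ?_⟩
  intro e he
  have key : e.1 = r0 ∨ e.1 = f1.1 := by
    by_contra hK
    push_neg at hK
    obtain ⟨hk0, hk1⟩ := hK
    have i0 : e.2.1 = b0 ∨ e.2.2 = g0 := by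
      rcases hint e he (r0, b0, g0) he0 with h | h | h
      · exact absurd h hk0
      · exact Or.inl h
      · exact Or.inr h
    have i1 : e.2.1 = f1.2.1 ∨ e.2.2 = g0 := by
      rcases hint e he f1 hf1E with h | h | h
      · exact absurd h hk1
      · exact Or.inl h
      · exact Or.inr (h.trans hg1)
    have i2 : e.2.1 = b0 ∨ e.2.2 = f2.2.2 := by
      rcases hint e he f2 hf2E with h | h | h
      · exact absurd (h.trans hrr) hk1
      · exact Or.inl (h.trans hb2)
      · exact Or.inr h
    have i3 : e.2.1 = f1.2.1 ∨ e.2.2 = f2.2.2 := by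
      rcases hint e he f3 hf3E with h | h | h
      · exact absurd (h.trans hr3) hk0
      · exact Or.inl (h.trans hbb)
      · exact Or.inr (h.trans hgg)
    by_cases hgcase : e.2.2 = g0
    · rcases i2 with h | h
      · rcases i3 with h' | h'
        · exact hb1 (h'.symm.trans h)
        · exact hg2 (h'.symm.trans hgcase)
      · exact hg2 (h.symm.trans hgcase)
    · rcases i0 with h | h
      · rcases i1 with h' | h'
        · exact hb1 (h'.symm.trans h)
        · exact hgcase h'
      · exact hgcase h
  rcases key with h | h
  · exact ⟨Sum.inl r0, by simp, h⟩
  · exact ⟨Sum.inl f1.1, by simp, h⟩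
end

section
/- Let H* be the 3-partite 3-uniform hypergraph with parts {r1,r2}, {b1,b2}, {g1,g2} and edges {r1,b1,g2}, {r1,b2,g1}, {r2,b1,g1}, {r2,b2,g2}. If H is a 3-partite 3-uniform hypergraph containing H* as a subhypergraph (with the same tripartition), then any edge of H that intersects each of the four edges of H* is itself one of the four edges of H*. -/
theorem stmt_3 {R B G : Type*} (E : Set (R × B × G))
    (r1 r2 : R) (b1 b2 : B) (g1 g2 : G)
    (hr : r1 ≠ r2) (hb : b1 ≠ b2) (hg : g1 ≠ g2)
    (h1 : (r1, b1, g2) ∈ E) (h2 : (r1, b2, g1) ∈ E)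
    (h3 : (r2, b1, g1) ∈ E) (h4 : (r2, b2, g2) ∈ E)
    (e : R × B × G) (he : e ∈ E)
    (hi1 : Intersect3 e (r1, b1, g2)) (hi2 : Intersect3 e (r1, b2, g1))
    (hi3 : Intersect3 e (r2, b1, g1)) (hi4 : Intersect3 e (r2, b2, g2)) :
    e = (r1, b1, g2) ∨ e = (r1, b2, g1) ∨ e = (r2, b1, g1) ∨ e = (r2, b2, g2) := by
  obtain ⟨r, b, g⟩ := e
  simp only [Intersect3, Prod.mk.injEq] at *
  rcases hi1 with h | h | h <;> rcases hi2 with h' | h' | h' <;>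
    rcases hi3 with h'' | h'' | h'' <;> rcases hi4 with h''' | h''' | h''' <;>
    subst_vars <;> tauto
end

section
/- The 3-partite 3-uniform hypergraph consisting of four pairwise disjoint edges has cover number at least 4, yet one can assign to every triple of its edges a 3-element transversal cover in such a way that any two of these assigned covers intersect. -/
instance {R B G : Type*} [DecidableEq R] [DecidableEq B] [DecidableEq G]
    (v : R ⊕ B ⊕ G) (e : R × B × G) : Decidable (Mem3 v e) :=
  match v with
  | Sum.inl r => decidable_of_iff (e.1 = r) Iff.rfl
  | Sum.inr (Sum.inl b) => decidable_of_iff (e.2.1 = b) Iff.rfl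
  | Sum.inr (Sum.inr g) => decidable_of_iff (e.2.2 = g) Iff.rfl

instance {R B G : Type*} [DecidableEq R] [DecidableEq B] [DecidableEq G]
    (e f : R × B × G) : Decidable (Intersect3 e f) := by
  unfold Intersect3; infer_instance

def Cov : Fin 4 → Fin 4 × Fin 4 × Fin 4
  | 0 => (1,2,3) | 1 => (0,2,3) | 2 => (0,1,3) | 3 => (0,2,1)

def miss (T : Fin 4 × Fin 4 × Fin 4) : Fin 4 :=
  if T.1 ≠ 0 ∧ T.2.1 ≠ 0 ∧ T.2.2 ≠ 0 then 0
  else if T.1 ≠ 1 ∧ T.2.1 ≠ 1 ∧ T.2.2 ≠ 1 then 1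
  else if T.1 ≠ 2 ∧ T.2.1 ≠ 2 ∧ T.2.2 ≠ 2 then 2
  else 3

set_option maxRecDepth 10000 in
/-- The 3-partite 3-graph consisting of four pairwise disjoint edges
(edge `i` is the triple `(i,i,i)`, for `i : Fin 4`) has cover number at least 4,
yet one can assign to every triple of its edges a transversal cover (an element
of the product of the three parts, i.e. one vertex per part) so that each assigned
cover intersects the three edges of its triple and any two assigned covers intersect. -/
theorem stmt_5 :
    (∀ S : Finset (Fin 4 ⊕ Fin 4 ⊕ Fin 4),
      (∀ i : Fin 4, ∃ v ∈ S, Mem3 v ((i, i, i) : Fin 4 × Fin 4 × Fin 4)) → 4 ≤ S.card) ∧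
    ∃ φ : Fin 4 × Fin 4 × Fin 4 → Fin 4 × Fin 4 × Fin 4,
      (∀ T : Fin 4 × Fin 4 × Fin 4,
        Intersect3 (φ T) (T.1, T.1, T.1) ∧ Intersect3 (φ T) (T.2.1, T.2.1, T.2.1) ∧
          Intersect3 (φ T) (T.2.2, T.2.2, T.2.2)) ∧
      ∀ T T' : Fin 4 × Fin 4 × Fin 4, Intersect3 (φ T) (φ T') := by
  constructor
  · intro S hS
    choose f hfS hf using hS
    have : (Finset.univ : Finset (Fin 4)).card ≤ S.card := by
      apply Finset.card_le_card_of_injOn f (fun i _ => hfS i)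
      intro i _ j _ hij
      have hi := hf i; have hj := hf j
      rw [hij] at hi
      rcases h : f j with r | b | g <;> rw [h] at hi hj <;>
        simp only [Mem3] at hi hj <;> rw [hi, hj]
    simpa using this
  · exact ⟨fun T => Cov (miss T), by decide, by decide⟩
end

section
/- Let r ≥ 2 and let H be an r-partite r-uniform hypergraph with intersecting k-covers for some k ≥ r. Then H has no matching of size 2r, and consequently τ(H) ≤ r(2r−1). -/
/-- An r-partite r-uniform hypergraph has parts `Vp i`, `i : Fin r`, and each
edge is a function picking one vertex from each part. Two edges intersect iff
they agree in some coordinate.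

If `H` (given by edge set `E`) has intersecting `k`-covers, witnessed by `φ`,
then it has no matching of size `2r`, and consequently `τ(H) ≤ r(2r-1)`. -/
theorem stmt_6 {r k : ℕ} (hr : 2 ≤ r) (hk : r ≤ k) {Vp : Fin r → Type*}
    (E : Set ((i : Fin r) → Vp i))
    (φ : (Fin k → ((i : Fin r) → Vp i)) → ((i : Fin r) → Vp i))
    (hφE : ∀ T : Fin k → ((i : Fin r) → Vp i), (∀ j, T j ∈ E) → φ T ∈ E)
    (hφcov : ∀ T : Fin k → ((i : Fin r) → Vp i), (∀ j, T j ∈ E) →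
      ∀ j, ∃ i, φ T i = T j i)
    (hφint : ∀ T T' : Fin k → ((i : Fin r) → Vp i), (∀ j, T j ∈ E) →
      (∀ j, T' j ∈ E) → ∃ i, φ T i = φ T' i) :
    (¬ ∃ f : Fin (2 * r) → ((i : Fin r) → Vp i),
      (∀ j, f j ∈ E) ∧ ∀ j j', j ≠ j' → ∀ i, f j i ≠ f j' i) ∧
    ∃ S : Finset ((i : Fin r) × Vp i), S.card ≤ r * (2 * r - 1) ∧
      ∀ e ∈ E, ∃ p ∈ S, e p.1 = p.2 := by
  classical
  have hr0 : 0 < r := by omega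
  -- Part 1: no matching of size 2r
  have hnomatch : ¬ ∃ f : Fin (2 * r) → ((i : Fin r) → Vp i),
      (∀ j, f j ∈ E) ∧ ∀ j j', j ≠ j' → ∀ i, f j i ≠ f j' i := by
    rintro ⟨f, hfE, hfd⟩
    set T : (Fin r → Fin (2 * r)) → Fin k → ((i : Fin r) → Vp i) :=
      fun ι j => f (ι ⟨(j : ℕ) % r, Nat.mod_lt _ hr0⟩) with hT
    have hTE : ∀ ι j, T ι j ∈ E := fun ι j => hfE _
    have key : ∀ ι : Fin r → Fin (2 * r), Function.Injective ι →
        ∀ i : Fin r, ∃ a : Fin r, φ (T ι) i = f (ι a) i := by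
      intro ι hι
      have hcov : ∀ a : Fin r, ∃ i, φ (T ι) i = f (ι a) i := by
        intro a
        have ha : (a : ℕ) < k := lt_of_lt_of_le a.2 hk
        obtain ⟨i, hi⟩ := hφcov (T ι) (hTE ι) ⟨(a : ℕ), ha⟩
        refine ⟨i, ?_⟩
        have heq : (⟨((⟨(a : ℕ), ha⟩ : Fin k) : ℕ) % r, Nat.mod_lt _ hr0⟩ : Fin r) = a :=
          Fin.ext (Nat.mod_eq_of_lt a.2)
        rw [hi]
        simp only [hT, heq]
      set ch : Fin r → Fin r := fun a => (hcov a).choose with hch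
      have hchs : ∀ a, φ (T ι) (ch a) = f (ι a) (ch a) := fun a => (hcov a).choose_spec
      have hinj : Function.Injective ch := by
        intro a a' h
        by_contra hne
        have h1 := hchs a
        have h2 := hchs a'
        rw [h] at h1
        exact hfd (ι a) (ι a') (fun he => hne (hι he)) (ch a') (h1.symm.trans h2)
      have hsurj : Function.Surjective ch := Finite.surjective_of_injective hinj
      intro i
      obtain ⟨a, ha⟩ := hsurj i
      exact ⟨a, by rw [← ha]; exact hchs a⟩
    have hb1 : ∀ a : Fin r, (a : ℕ) < 2 * r := fun a => by omega
    have hb2 : ∀ a : Fin r, r + (a : ℕ) < 2 * r := fun a => by omega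
    set ι1 : Fin r → Fin (2 * r) := fun a => ⟨(a : ℕ), hb1 a⟩ with hι1def
    set ι2 : Fin r → Fin (2 * r) := fun a => ⟨r + (a : ℕ), hb2 a⟩ with hι2def
    have hι1 : Function.Injective ι1 := by
      intro a a' h
      have : (ι1 a).val = (ι1 a').val := congrArg Fin.val h
      exact Fin.ext this
    have hι2 : Function.Injective ι2 := by
      intro a a' h
      have : (ι2 a).val = (ι2 a').val := congrArg Fin.val h
      simp only [hι2def] at this
      exact Fin.ext (by omega)
    obtain ⟨i, hi⟩ := hφint (T ι1) (T ι2) (hTE ι1) (hTE ι2)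
    obtain ⟨a, hA⟩ := key ι1 hι1 i
    obtain ⟨b, hB⟩ := key ι2 hι2 i
    have hne : ι1 a ≠ ι2 b := by
      intro h
      have : (ι1 a).val = (ι2 b).val := congrArg Fin.val h
      simp only [hι1def, hι2def] at this
      omega
    exact hfd _ _ hne i ((hA.symm.trans hi).trans hB)
  refine ⟨hnomatch, ?_⟩
  -- Part 2: cover of size r(2r-1)
  set P : ℕ → Prop := fun n => ∃ g : Fin n → ((i : Fin r) → Vp i),
    (∀ j, g j ∈ E) ∧ ∀ j j', j ≠ j' → ∀ i, g j i ≠ g j' i with hP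
  have hP0 : P 0 := ⟨Fin.elim0, fun j => j.elim0, fun j => j.elim0⟩
  set m : ℕ := Nat.findGreatest P (2 * r) with hm
  have hPm : P m := Nat.findGreatest_spec (Nat.zero_le _) hP0
  have hmle : m ≤ 2 * r := Nat.findGreatest_le _
  have hmne : m ≠ 2 * r := by
    intro h
    exact hnomatch (by rw [← h]; exact hPm)
  have hmlt : m < 2 * r := lt_of_le_of_ne hmle hmne
  obtain ⟨g, hgE, hgd⟩ := hPm
  refine ⟨Finset.image (fun p : Fin r × Fin m => (⟨p.1, g p.2 p.1⟩ : (i : Fin r) × Vp i))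
    Finset.univ, ?_, ?_⟩
  · calc (Finset.image (fun p : Fin r × Fin m => (⟨p.1, g p.2 p.1⟩ : (i : Fin r) × Vp i))
        Finset.univ).card ≤ (Finset.univ : Finset (Fin r × Fin m)).card :=
          Finset.card_image_le
    _ = r * m := by simp [Finset.card_univ]
    _ ≤ r * (2 * r - 1) := Nat.mul_le_mul_left _ (by omega)
  · intro e he
    by_contra hcon
    push_neg at hcon
    have hnc : ∀ (j : Fin m) (i : Fin r), e i ≠ g j i := by
      intro j i h
      exact hcon ⟨i, g j i⟩ (Finset.mem_image.mpr ⟨(i, j), Finset.mem_univ _, rfl⟩) h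
    have hPm1 : P (m + 1) := by
      refine ⟨Fin.snoc g e, ?_, ?_⟩
      · intro j
        rcases Fin.eq_castSucc_or_eq_last j with ⟨j0, rfl⟩ | rfl
        · simpa using hgE j0
        · simpa using he
      · intro j j' hjj' i
        rcases Fin.eq_castSucc_or_eq_last j with ⟨j0, rfl⟩ | rfl <;>
          rcases Fin.eq_castSucc_or_eq_last j' with ⟨j0', rfl⟩ | rfl
        · simp only [Fin.snoc_castSucc]
          exact hgd j0 j0' (fun h => hjj' (congrArg Fin.castSucc h)) i
        · simp only [Fin.snoc_castSucc, Fin.snoc_last]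
          exact fun h => hnc j0 i h.symm
        · simp only [Fin.snoc_castSucc, Fin.snoc_last]
          exact hnc j0' i
        · exact absurd rfl hjj'
    exact Nat.findGreatest_is_greatest (n := 2 * r) (Nat.lt_succ_self m) hmlt hPm1
end

section
/- Let r ≥ 2, m ≥ 1, and let H be an (r,m)-coverable r-partite r-uniform hypergraph. Then τ(H) ≤ r². -/
private lemma pin_coords_stmt7 {r : ℕ} (hr : 1 ≤ r) {Vp : Fin r → Type*}
    (t : Fin (r - 1) → ((i : Fin r) → Vp i)) (ρ f : (i : Fin r) → Vp i)
    (hdisj : ∀ l l', l ≠ l' → ∀ c, t l c ≠ t l' c)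
    (hρt : ∀ l c, t l c ≠ ρ c)
    (hT : ∀ l, ∃ c, f c = t l c) (hρ : ∃ c, f c = ρ c) :
    ∀ c, f c = ρ c ∨ ∃ l, f c = t l c := by
  classical
  choose ψ hψ using hT
  obtain ⟨c₀, hc₀⟩ := hρ
  have hinj : Function.Injective ψ := by
    intro a b hab
    by_contra hne
    have h1 : f (ψ b) = t a (ψ b) := by rw [← hab]; exact hψ a
    exact hdisj a b hne (ψ b) (h1.symm.trans (hψ b))
  have hc0 : ∀ l, ψ l ≠ c₀ := by
    intro l h
    have h1 : f c₀ = t l c₀ := by rw [← h]; exact hψ l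
    exact hρt l c₀ (h1.symm.trans hc₀)
  have hnotmem : c₀ ∉ Finset.univ.image ψ := by
    simp only [Finset.mem_image, Finset.mem_univ, true_and]
    rintro ⟨l, hl⟩
    exact hc0 l hl
  have hcard : (insert c₀ (Finset.univ.image ψ)).card = r := by
    rw [Finset.card_insert_of_notMem hnotmem,
      Finset.card_image_of_injective _ hinj, Finset.card_univ, Fintype.card_fin]
    omega
  have huniv : insert c₀ (Finset.univ.image ψ) = Finset.univ :=
    Finset.eq_univ_of_card _ (by rw [hcard, Fintype.card_fin])
  intro c
  have hc : c ∈ insert c₀ (Finset.univ.image ψ) := by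
    rw [huniv]; exact Finset.mem_univ c
  rcases Finset.mem_insert.mp hc with h | h
  · left; rw [h]; exact hc₀
  · right
    obtain ⟨l, -, hl⟩ := Finset.mem_image.mp h
    exact ⟨l, by rw [← hl]; exact hψ l⟩

private lemma max_family_cover_stmt7 {r : ℕ} {Vp : Fin r → Type*} (N : ℕ)
    (Av : ((i : Fin r) → Vp i) → Prop)
    (hno : ¬ ∃ t : Fin N → ((i : Fin r) → Vp i),
      (∀ l, Av (t l)) ∧ ∀ l l', l ≠ l' → ∀ c, t l c ≠ t l' c) :
    ∃ F : Finset ((i : Fin r) × Vp i), F.card ≤ (N - 1) * r ∧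
      ∀ e, Av e → ∃ p ∈ F, e p.1 = p.2 := by
  classical
  set P : ℕ → Prop := fun n => ∃ t : Fin n → ((i : Fin r) → Vp i),
      (∀ l, Av (t l)) ∧ ∀ l l', l ≠ l' → ∀ c, t l c ≠ t l' c with hPdef
  have hP0 : P 0 := ⟨fun l => l.elim0, fun l => l.elim0, fun l => l.elim0⟩
  rcases Nat.eq_zero_or_pos N with hN0 | hN1
  · subst hN0; exact absurd hP0 hno
  letI : DecidablePred P := fun _ => Classical.dec _
  have hqb : Nat.findGreatest P (N - 1) ≤ N - 1 := Nat.findGreatest_le _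
  have hPq : P (Nat.findGreatest P (N - 1)) := Nat.findGreatest_spec (Nat.zero_le _) hP0
  set q := Nat.findGreatest P (N - 1) with hqdef
  have hnoq : ¬ P (q + 1) := by
    rcases lt_or_ge (q + 1) N with h | h
    · exact Nat.findGreatest_is_greatest
        (show Nat.findGreatest P (N - 1) < q + 1 by omega) (by omega)
    · have hqN : q + 1 = N := by omega
      rw [hqN]; exact hno
  obtain ⟨t, hAv, hdisj⟩ := hPq
  refine ⟨(Finset.univ : Finset (Fin q)).biUnion
      (fun l => (Finset.univ : Finset (Fin r)).image
        (fun c => (⟨c, t l c⟩ : (i : Fin r) × Vp i))), ?_, ?_⟩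
  · have hb1 := Finset.card_biUnion_le (s := (Finset.univ : Finset (Fin q)))
      (t := fun l => (Finset.univ : Finset (Fin r)).image
        (fun c => (⟨c, t l c⟩ : (i : Fin r) × Vp i)))
    have hb2 : (∑ l ∈ (Finset.univ : Finset (Fin q)),
        ((Finset.univ : Finset (Fin r)).image
          (fun c => (⟨c, t l c⟩ : (i : Fin r) × Vp i))).card)
        ≤ ∑ _l ∈ (Finset.univ : Finset (Fin q)), r := by
      refine Finset.sum_le_sum fun l _ => ?_
      exact le_trans Finset.card_image_le (by simp)
    have hb3 : (∑ _l ∈ (Finset.univ : Finset (Fin q)), r) = q * r := by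
      rw [Finset.sum_const, Finset.card_univ, Fintype.card_fin, smul_eq_mul]
    have hb4 : q * r ≤ (N - 1) * r := Nat.mul_le_mul_right _ hqb
    omega
  · intro e hAve
    by_cases hmeet : ∃ l : Fin q, ∃ c, e c = t l c
    · obtain ⟨l, c, hc⟩ := hmeet
      refine ⟨⟨c, t l c⟩, ?_, hc⟩
      exact Finset.mem_biUnion.mpr ⟨l, Finset.mem_univ _,
        Finset.mem_image_of_mem _ (Finset.mem_univ _)⟩
    · exfalso
      push_neg at hmeet
      apply hnoq
      refine ⟨fun l => if h : (l : ℕ) < q then t ⟨(l : ℕ), h⟩ else e,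
        fun l => ?_, fun a b hab c => ?_⟩
      · by_cases h : (l : ℕ) < q
        · simp only [dif_pos h]; exact hAv _
        · simp only [dif_neg h]; exact hAve
      · by_cases ha : (a : ℕ) < q <;> by_cases hb : (b : ℕ) < q
        · simp only [dif_pos ha, dif_pos hb]
          refine hdisj ⟨(a : ℕ), ha⟩ ⟨(b : ℕ), hb⟩ (fun h => hab ?_) c
          exact Fin.val_injective (Fin.mk_eq_mk.mp h)
        · simp only [dif_pos ha, dif_neg hb]
          exact fun h => hmeet ⟨(a : ℕ), ha⟩ c h.symm
        · simp only [dif_neg ha, dif_pos hb]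
          exact hmeet ⟨(b : ℕ), hb⟩ c
        · refine absurd (Fin.val_injective ?_) hab
          have h1 := a.isLt
          have h2 := b.isLt
          show (a : ℕ) = (b : ℕ)
          omega

/-- If an r-partite r-uniform hypergraph (edges are functions picking one vertex
from each part; two edges intersect iff they agree in some coordinate) is
`(r,m)`-coverable, witnessed by the chain `Hs 0 ⊇ Hs 1 ⊇ ... ⊇ Hs m` with
`Hs 0` the edge set of `H` and properties P1, P2, P3, then `τ(H) ≤ r²`. -/
theorem stmt_7 {r : ℕ} (hr : 2 ≤ r) {Vp : Fin r → Type*} (m : ℕ) (hm : 1 ≤ m)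
    (Hs : ℕ → Set ((i : Fin r) → Vp i))
    (hchain : ∀ i < m, Hs (i + 1) ⊆ Hs i)
    (hP1 : ∀ T : Fin (r - 1) → ((i : Fin r) → Vp i), (∀ j, T j ∈ Hs 0) →
      ∃ f ∈ Hs m, ∀ j, ∃ i, f i = T j i)
    (hP2 : ∀ T : Fin (r - 1) → ((i : Fin r) → Vp i), (∀ j, T j ∈ Hs 0) →
      ∀ i < m, ∀ e ∈ Hs i, ∃ f ∈ Hs (i + 1),
        (∀ j, ∃ i', f i' = T j i') ∧ ∃ i', f i' = e i')
    (hP3 : ∀ e ∈ Hs m, ∀ f ∈ Hs m, ∃ i, e i = f i) :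
    ∃ S : Finset ((i : Fin r) × Vp i), S.card ≤ r * r ∧
      ∀ e ∈ Hs 0, ∃ p ∈ S, e p.1 = p.2 := by
  classical
  by_cases hne : ∃ e₀, e₀ ∈ Hs 0
  swap
  · exact ⟨∅, by simp, fun e he => absurd ⟨e, he⟩ hne⟩
  obtain ⟨e₀, he₀⟩ := hne
  obtain ⟨g, hg, -⟩ := hP1 (fun _ => e₀) (fun _ => he₀)
  have key1 : r + (r - 1) * r = r * r := by
    obtain ⟨s, rfl⟩ : ∃ s, r = s + 2 := ⟨r - 2, by omega⟩
    show s + 2 + (s + 1) * (s + 2) = (s + 2) * (s + 2)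
    ring
  have key2 : (r + r) + (r - 1 - 1) * r = r * r := by
    obtain ⟨s, rfl⟩ : ∃ s, r = s + 2 := ⟨r - 2, by omega⟩
    show (s + 2 + (s + 2)) + s * (s + 2) = (s + 2) * (s + 2)
    ring
  -- descent lemma
  have main : ∀ k j, j + k = m → 1 ≤ j → ∀ ρ, ρ ∈ Hs j → (∀ c, ρ c ≠ g c) →
      ∃ S : Finset ((i : Fin r) × Vp i), S.card ≤ r * r ∧
        ∀ e ∈ Hs 0, ∃ p ∈ S, e p.1 = p.2 := by
    intro k
    induction k with
    | zero =>
      intro j hjm _ ρ hρ hav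
      exfalso
      have hρm : ρ ∈ Hs m := by
        have hj : j = m := by omega
        rwa [hj] at hρ
      obtain ⟨c, hc⟩ := hP3 g hg ρ hρm
      exact hav c hc.symm
    | succ k ih =>
      intro j hjm hj ρ hρ hav
      by_cases hstop : ∃ t : Fin (r - 1) → ((i : Fin r) → Vp i),
          (∀ l, t l ∈ Hs 0 ∧ (∀ c, t l c ≠ g c) ∧ (∀ c, t l c ≠ ρ c)) ∧
          ∀ l l', l ≠ l' → ∀ c, t l c ≠ t l' c
      · obtain ⟨t, hts, hdisj⟩ := hstop
        obtain ⟨f, hf, hfT, hfρ⟩ := hP2 t (fun l => (hts l).1) j (by omega) ρ hρ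
        have hcoords := pin_coords_stmt7 (by omega) t ρ f hdisj
          (fun l c => (hts l).2.2 c) hfT hfρ
        refine ih (j + 1) (by omega) (by omega) f hf ?_
        intro c
        rcases hcoords c with h | ⟨l, h⟩
        · rw [h]; exact hav c
        · rw [h]; exact (hts l).2.1 c
      · obtain ⟨F, hFcard, hFcov⟩ := max_family_cover_stmt7 (r - 1)
          (fun e => e ∈ Hs 0 ∧ (∀ c, e c ≠ g c) ∧ (∀ c, e c ≠ ρ c)) hstop
        refine ⟨((Finset.univ.image fun c => (⟨c, g c⟩ : (i : Fin r) × Vp i)) ∪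
            (Finset.univ.image fun c => (⟨c, ρ c⟩ : (i : Fin r) × Vp i))) ∪ F, ?_, ?_⟩
        · have h1 : (Finset.univ.image fun c => (⟨c, g c⟩ : (i : Fin r) × Vp i)).card ≤ r :=
            le_trans Finset.card_image_le (by simp)
          have h2 : (Finset.univ.image fun c => (⟨c, ρ c⟩ : (i : Fin r) × Vp i)).card ≤ r :=
            le_trans Finset.card_image_le (by simp)
          have h3 := Finset.card_union_le
            (Finset.univ.image fun c => (⟨c, g c⟩ : (i : Fin r) × Vp i))
            (Finset.univ.image fun c => (⟨c, ρ c⟩ : (i : Fin r) × Vp i))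
          have h4 := Finset.card_union_le
            ((Finset.univ.image fun c => (⟨c, g c⟩ : (i : Fin r) × Vp i)) ∪
              (Finset.univ.image fun c => (⟨c, ρ c⟩ : (i : Fin r) × Vp i))) F
          omega
        · intro e he
          by_cases h1 : ∃ c, e c = g c
          · obtain ⟨c, hc⟩ := h1
            exact ⟨⟨c, g c⟩, Finset.mem_union_left _ (Finset.mem_union_left _
              (Finset.mem_image_of_mem _ (Finset.mem_univ _))), hc⟩
          · by_cases h2 : ∃ c, e c = ρ c
            · obtain ⟨c, hc⟩ := h2
              exact ⟨⟨c, ρ c⟩, Finset.mem_union_left _ (Finset.mem_union_right _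
                (Finset.mem_image_of_mem _ (Finset.mem_univ _))), hc⟩
            · push_neg at h1 h2
              obtain ⟨p, hp, hpe⟩ := hFcov e ⟨he, h1, h2⟩
              exact ⟨p, Finset.mem_union_right _ hp, hpe⟩
  -- main case split
  by_cases hAB : ∃ y : Fin r → ((i : Fin r) → Vp i),
      (∀ l, y l ∈ Hs 0 ∧ (∀ c, y l c ≠ g c)) ∧
      ∀ l l', l ≠ l' → ∀ c, y l c ≠ y l' c
  · -- there exist r pairwise disjoint g-avoiding edges: build a rainbow in Hs 1
    obtain ⟨y, hym, hydisj⟩ := hAB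
    have hlast : r - 1 < r := by omega
    have hle : r - 1 ≤ r := by omega
    obtain ⟨f, hf, hfT, hfy⟩ := hP2 (fun l => y (Fin.castLE hle l))
      (fun l => (hym _).1) 0 (by omega) (y ⟨r - 1, hlast⟩) (hym _).1
    have hdisjT : ∀ l l' : Fin (r - 1), l ≠ l' → ∀ c,
        y (Fin.castLE hle l) c ≠ y (Fin.castLE hle l') c := by
      intro l l' hll' c
      refine hydisj _ _ (fun h => hll' ?_) c
      have hval : (l : ℕ) = (l' : ℕ) := by
        simpa using congrArg Fin.val h
      exact Fin.val_injective hval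
    have hρT : ∀ (l : Fin (r - 1)) c,
        y (Fin.castLE hle l) c ≠ y ⟨r - 1, hlast⟩ c := by
      intro l c
      refine hydisj _ _ (fun h => ?_) c
      have hval : (l : ℕ) = r - 1 := by
        simpa using congrArg Fin.val h
      have := l.isLt
      omega
    have hcoords := pin_coords_stmt7 (by omega) (fun l => y (Fin.castLE hle l))
      (y ⟨r - 1, hlast⟩) f hdisjT hρT hfT hfy
    have havf : ∀ c, f c ≠ g c := by
      intro c
      rcases hcoords c with h | ⟨l, h⟩
      · rw [h]; exact (hym _).2 c
      · rw [h]; exact (hym _).2 c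
    exact main (m - 1) 1 (by omega) (by omega) f hf havf
  · -- no r pairwise disjoint g-avoiding edges
    obtain ⟨F, hFcard, hFcov⟩ := max_family_cover_stmt7 r
      (fun e => e ∈ Hs 0 ∧ (∀ c, e c ≠ g c)) hAB
    refine ⟨(Finset.univ.image fun c => (⟨c, g c⟩ : (i : Fin r) × Vp i)) ∪ F, ?_, ?_⟩
    · have h1 : (Finset.univ.image fun c => (⟨c, g c⟩ : (i : Fin r) × Vp i)).card ≤ r :=
        le_trans Finset.card_image_le (by simp)
      have h2 := Finset.card_union_le
        (Finset.univ.image fun c => (⟨c, g c⟩ : (i : Fin r) × Vp i)) F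
      omega
    · intro e he
      by_cases h1 : ∃ c, e c = g c
      · obtain ⟨c, hc⟩ := h1
        exact ⟨⟨c, g c⟩, Finset.mem_union_left _
          (Finset.mem_image_of_mem _ (Finset.mem_univ _)), hc⟩
      · push_neg at h1
        obtain ⟨p, hp, hpe⟩ := hFcov e ⟨he, h1⟩
        exact ⟨p, Finset.mem_union_right _ hp, hpe⟩
end

section
/- Let m ≥ 1 and let H be a (4,m)-coverable 3-partite 3-uniform hypergraph. Then τ(H) ≤ 3. -/
private lemma isym {R B G : Type*} {e f : R × B × G} (h : Intersect3 e f) : Intersect3 f e := by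
  rcases h with h | h | h
  · exact Or.inl h.symm
  · exact Or.inr (Or.inl h.symm)
  · exact Or.inr (Or.inr h.symm)

/-- König-type lemma for matching number ≤ 2: a family of bipartite pairs in which
any three members contain two sharing a coordinate has a vertex cover of size ≤ 2. -/
private lemma konig2 {U V : Type*} (P : Set (U × V))
    (h3 : ∀ p ∈ P, ∀ q ∈ P, ∀ r ∈ P,
      p.1 = q.1 ∨ p.2 = q.2 ∨ p.1 = r.1 ∨ p.2 = r.2 ∨ q.1 = r.1 ∨ q.2 = r.2) :
    ∃ S : Finset (U ⊕ V), S.card ≤ 2 ∧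
      ∀ p ∈ P, ∃ w ∈ S, Sum.elim (fun u => p.1 = u) (fun v => p.2 = v) w := by
  classical
  by_cases hpair : ∃ p ∈ P, ∃ q ∈ P, p.1 ≠ q.1 ∧ p.2 ≠ q.2
  · obtain ⟨e, heP, e', he'P, hb, hg⟩ := hpair
    -- E1 : misses e' ; E2 : misses e
    have hE1pair : ∀ p ∈ P, p.1 ≠ e'.1 → p.2 ≠ e'.2 → ∀ q ∈ P, q.1 ≠ e'.1 → q.2 ≠ e'.2 →
        p.1 = q.1 ∨ p.2 = q.2 := by
      intro p hp hp1 hp2 q hq hq1 hq2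
      rcases h3 p hp q hq e' he'P with h | h | h | h | h | h
      · exact Or.inl h
      · exact Or.inr h
      · exact absurd h hp1
      · exact absurd h hp2
      · exact absurd h hq1
      · exact absurd h hq2
    have hE2pair : ∀ p ∈ P, p.1 ≠ e.1 → p.2 ≠ e.2 → ∀ q ∈ P, q.1 ≠ e.1 → q.2 ≠ e.2 →
        p.1 = q.1 ∨ p.2 = q.2 := by
      intro p hp hp1 hp2 q hq hq1 hq2
      rcases h3 p hp q hq e heP with h | h | h | h | h | h
      · exact Or.inl h
      · exact Or.inr h
      · exact absurd h hp1
      · exact absurd h hp2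
      · exact absurd h hq1
      · exact absurd h hq2
    by_cases hg1 : ∀ p ∈ P, p.1 ≠ e'.1 → p.2 ≠ e'.2 → p.2 = e.2
    · by_cases hg2 : ∀ p ∈ P, p.1 ≠ e.1 → p.2 ≠ e.2 → p.2 = e'.2
      · -- cover {g1, g2}
        refine ⟨{Sum.inr e.2, Sum.inr e'.2}, ?_, ?_⟩
        · exact (Finset.card_insert_le _ _).trans (by simp)
        · intro p hp
          by_cases hp1 : p.1 ≠ e'.1 ∧ p.2 ≠ e'.2
          · exact ⟨Sum.inr e.2, by simp, hg1 p hp hp1.1 hp1.2⟩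
          by_cases hp2 : p.1 ≠ e.1 ∧ p.2 ≠ e.2
          · exact ⟨Sum.inr e'.2, by simp, hg2 p hp hp2.1 hp2.2⟩
          push_neg at hp1 hp2
          by_cases hc1 : p.2 = e.2
          · exact ⟨Sum.inr e.2, by simp, hc1⟩
          by_cases hc2 : p.2 = e'.2
          · exact ⟨Sum.inr e'.2, by simp, hc2⟩
          · -- then p.1 = e'.1 and p.1 = e.1 : contradiction
            exfalso
            have h1 : p.1 = e'.1 := by
              by_contra hcon; exact hc2 (hp1 hcon)
            have h2 : p.1 = e.1 := by
              by_contra hcon; exact hc1 (hp2 hcon)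
            exact absurd (h2.symm.trans h1) hb
      · -- witness q2 in E2 with q2.2 ≠ e'.2 ; then q2.1 = e'.1 and all of E2 has .1 = e'.1
        push_neg at hg2
        obtain ⟨q2, hq2P, hq2a, hq2b, hq2c⟩ := hg2
        -- q2 meets e or e' (from h3 q2 e e'); being in E2 it must meet e'
        have hq21 : q2.1 = e'.1 := by
          rcases h3 q2 hq2P e heP e' he'P with h | h | h | h | h | h
          · exact absurd h hq2a
          · exact absurd h hq2b
          · exact h
          · exact absurd h hq2c
          · exact absurd h hb
          · exact absurd h hg
        have hallE2 : ∀ r ∈ P, r.1 ≠ e.1 → r.2 ≠ e.2 → r.1 = e'.1 := by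
          intro r hr hr1 hr2
          rcases hE2pair r hr hr1 hr2 q2 hq2P hq2a hq2b with h | h
          · exact h.trans hq21
          · -- r.2 = q2.2 ; r meets e or e', must meet e' since in E2
            rcases h3 r hr e heP e' he'P with hh | hh | hh | hh | hh | hh
            · exact absurd hh hr1
            · exact absurd hh hr2
            · exact hh
            · exact absurd (h.symm.trans hh) hq2c
            · exact absurd hh hb
            · exact absurd hh hg
        by_cases hb1 : ∀ p ∈ P, p.1 ≠ e'.1 → p.2 ≠ e'.2 → p.1 = e.1
        · -- cover {b1, b2}
          refine ⟨{Sum.inl e.1, Sum.inl e'.1}, ?_, ?_⟩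
          · exact (Finset.card_insert_le _ _).trans (by simp)
          · intro p hp
            by_cases hp1 : p.1 ≠ e'.1 ∧ p.2 ≠ e'.2
            · exact ⟨Sum.inl e.1, by simp, hb1 p hp hp1.1 hp1.2⟩
            by_cases hp2 : p.1 ≠ e.1 ∧ p.2 ≠ e.2
            · exact ⟨Sum.inl e'.1, by simp, hallE2 p hp hp2.1 hp2.2⟩
            push_neg at hp1 hp2
            by_cases hc1 : p.1 = e.1
            · exact ⟨Sum.inl e.1, by simp, hc1⟩
            by_cases hc2 : p.1 = e'.1
            · exact ⟨Sum.inl e'.1, by simp, hc2⟩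
            · exfalso
              have h1 : p.2 = e'.2 := hp1 hc2
              have h2 : p.2 = e.2 := hp2 hc1
              exact hg (h2.symm.trans h1)
        · push_neg at hb1
          obtain ⟨s1, hs1P, hs1a, hs1b, hs1c⟩ := hb1
          have hs1g : s1.2 = e.2 := hg1 s1 hs1P hs1a hs1b
          -- cover {g1, b2} ; the only possibly-uncovered shape gives a 3-matching
          refine ⟨{Sum.inr e.2, Sum.inl e'.1}, ?_, ?_⟩
          · exact (Finset.card_insert_le _ _).trans (by simp)
          · intro p hp
            by_cases hp1 : p.1 ≠ e'.1 ∧ p.2 ≠ e'.2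
            · exact ⟨Sum.inr e.2, by simp, hg1 p hp hp1.1 hp1.2⟩
            by_cases hp2 : p.1 ≠ e.1 ∧ p.2 ≠ e.2
            · exact ⟨Sum.inl e'.1, by simp, hallE2 p hp hp2.1 hp2.2⟩
            push_neg at hp1 hp2
            by_cases hc1 : p.2 = e.2
            · exact ⟨Sum.inr e.2, by simp, hc1⟩
            by_cases hc2 : p.1 = e'.1
            · exact ⟨Sum.inl e'.1, by simp, hc2⟩
            · -- p.2 = e'.2 ∧ p.1 = e.1 : bad pair, contradiction via h3 p q2 s1
              have hpg : p.2 = e'.2 := hp1 hc2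
              have hpb : p.1 = e.1 := by
                by_contra hcon; exact hc1 (hp2 hcon)
              exfalso
              rcases h3 p hp q2 hq2P s1 hs1P with h | h | h | h | h | h
              · exact hb (hpb.symm.trans (h.trans hq21))
              · exact hq2c (h.symm.trans hpg)
              · exact hs1c (h.symm.trans hpb)
              · exact hg ((hpg.symm.trans h).trans hs1g).symm
              · exact hs1a (h.symm.trans hq21)
              · exact hq2b (h.trans hs1g)
    · -- witness p1 in E1 with p1.2 ≠ e.2, then p1.1 = e.1 and all of E1 has .1 = e.1
      push_neg at hg1
      obtain ⟨p1, hp1P, hp1a, hp1b, hp1c⟩ := hg1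
      have hp11 : p1.1 = e.1 := by
        rcases h3 p1 hp1P e heP e' he'P with h | h | h | h | h | h
        · exact h
        · exact absurd h hp1c
        · exact absurd h hp1a
        · exact absurd h hp1b
        · exact absurd h hb
        · exact absurd h hg
      have hallE1 : ∀ r ∈ P, r.1 ≠ e'.1 → r.2 ≠ e'.2 → r.1 = e.1 := by
        intro r hr hr1 hr2
        rcases hE1pair r hr hr1 hr2 p1 hp1P hp1a hp1b with h | h
        · exact h.trans hp11
        · rcases h3 r hr e heP e' he'P with hh | hh | hh | hh | hh | hh
          · exact hh
          · exact absurd (h.symm.trans hh) hp1c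
          · exact absurd hh hr1
          · exact absurd hh hr2
          · exact absurd hh hb
          · exact absurd hh hg
      by_cases hg2 : ∀ p ∈ P, p.1 ≠ e.1 → p.2 ≠ e.2 → p.2 = e'.2
      · by_cases hb2 : ∀ p ∈ P, p.1 ≠ e.1 → p.2 ≠ e.2 → p.1 = e'.1
        · refine ⟨{Sum.inl e.1, Sum.inl e'.1}, ?_, ?_⟩
          · exact (Finset.card_insert_le _ _).trans (by simp)
          · intro p hp
            by_cases hp1 : p.1 ≠ e'.1 ∧ p.2 ≠ e'.2
            · exact ⟨Sum.inl e.1, by simp, hallE1 p hp hp1.1 hp1.2⟩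
            by_cases hp2 : p.1 ≠ e.1 ∧ p.2 ≠ e.2
            · exact ⟨Sum.inl e'.1, by simp, hb2 p hp hp2.1 hp2.2⟩
            push_neg at hp1 hp2
            by_cases hc1 : p.1 = e.1
            · exact ⟨Sum.inl e.1, by simp, hc1⟩
            by_cases hc2 : p.1 = e'.1
            · exact ⟨Sum.inl e'.1, by simp, hc2⟩
            · exfalso
              have h1 : p.2 = e'.2 := hp1 hc2
              have h2 : p.2 = e.2 := hp2 hc1
              exact hg (h2.symm.trans h1)
        · push_neg at hb2
          obtain ⟨t2, ht2P, ht2a, ht2b, ht2c⟩ := hb2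
          have ht2g : t2.2 = e'.2 := hg2 t2 ht2P ht2a ht2b
          refine ⟨{Sum.inl e.1, Sum.inr e'.2}, ?_, ?_⟩
          · exact (Finset.card_insert_le _ _).trans (by simp)
          · intro p hp
            by_cases hp1 : p.1 ≠ e'.1 ∧ p.2 ≠ e'.2
            · exact ⟨Sum.inl e.1, by simp, hallE1 p hp hp1.1 hp1.2⟩
            by_cases hp2 : p.1 ≠ e.1 ∧ p.2 ≠ e.2
            · exact ⟨Sum.inr e'.2, by simp, hg2 p hp hp2.1 hp2.2⟩
            push_neg at hp1 hp2
            by_cases hc1 : p.1 = e.1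
            · exact ⟨Sum.inl e.1, by simp, hc1⟩
            by_cases hc2 : p.2 = e'.2
            · exact ⟨Sum.inr e'.2, by simp, hc2⟩
            · -- p.1 = e'.1 ∧ p.2 = e.2 : bad pair; contradiction via h3 p p1 t2
              have hpb : p.1 = e'.1 := by
                by_contra hcon
                exact hc2 (hp1 hcon)
              have hpg : p.2 = e.2 := hp2 hc1
              exfalso
              rcases h3 p hp p1 hp1P t2 ht2P with h | h | h | h | h | h
              · exact hb (((hpb.symm.trans h).trans hp11)).symm
              · exact hp1c (h.symm.trans hpg)
              · exact ht2c (h.symm.trans hpb)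
              · exact hg ((hpg.symm.trans h).trans ht2g)
              · exact ht2a ((h.symm.trans hp11))
              · exact hp1b (h.trans ht2g)
      · push_neg at hg2
        obtain ⟨q2, hq2P, hq2a, hq2b, hq2c⟩ := hg2
        have hq21 : q2.1 = e'.1 := by
          rcases h3 q2 hq2P e heP e' he'P with h | h | h | h | h | h
          · exact absurd h hq2a
          · exact absurd h hq2b
          · exact h
          · exact absurd h hq2c
          · exact absurd h hb
          · exact absurd h hg
        have hallE2 : ∀ r ∈ P, r.1 ≠ e.1 → r.2 ≠ e.2 → r.1 = e'.1 := by
          intro r hr hr1 hr2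
          rcases hE2pair r hr hr1 hr2 q2 hq2P hq2a hq2b with h | h
          · exact h.trans hq21
          · rcases h3 r hr e heP e' he'P with hh | hh | hh | hh | hh | hh
            · exact absurd hh hr1
            · exact absurd hh hr2
            · exact hh
            · exact absurd (h.symm.trans hh) hq2c
            · exact absurd hh hb
            · exact absurd hh hg
        refine ⟨{Sum.inl e.1, Sum.inl e'.1}, ?_, ?_⟩
        · exact (Finset.card_insert_le _ _).trans (by simp)
        · intro p hp
          by_cases hp1 : p.1 ≠ e'.1 ∧ p.2 ≠ e'.2
          · exact ⟨Sum.inl e.1, by simp, hallE1 p hp hp1.1 hp1.2⟩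
          by_cases hp2 : p.1 ≠ e.1 ∧ p.2 ≠ e.2
          · exact ⟨Sum.inl e'.1, by simp, hallE2 p hp hp2.1 hp2.2⟩
          push_neg at hp1 hp2
          by_cases hc1 : p.1 = e.1
          · exact ⟨Sum.inl e.1, by simp, hc1⟩
          by_cases hc2 : p.1 = e'.1
          · exact ⟨Sum.inl e'.1, by simp, hc2⟩
          · exfalso
            have h1 : p.2 = e'.2 := hp1 hc2
            have h2 : p.2 = e.2 := hp2 hc1
            exact hg (h2.symm.trans h1)
  · -- P pairwise intersecting : a single vertex covers
    push_neg at hpair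
    by_cases h0 : ∃ p, p ∈ P
    · obtain ⟨p0, hp0⟩ := h0
      by_cases hA : ∀ p ∈ P, p.1 = p0.1
      · exact ⟨{Sum.inl p0.1}, by simp, fun p hp => ⟨Sum.inl p0.1, by simp, hA p hp⟩⟩
      · push_neg at hA
        obtain ⟨p1, hp1P, hp1⟩ := hA
        have hp12 : p1.2 = p0.2 := hpair p1 hp1P p0 hp0 hp1
        refine ⟨{Sum.inr p0.2}, by simp, fun p hp => ⟨Sum.inr p0.2, by simp, ?_⟩⟩
        by_contra hcon
        have h1 : p.1 = p0.1 := by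
          by_contra hx; exact hcon (hpair p hp p0 hp0 hx)
        have h2 : p.1 = p1.1 := by
          by_contra hx
          exact hcon ((hpair p hp p1 hp1P hx).trans hp12)
        exact hp1 (h2.symm.trans h1)
    · exact ⟨∅, by simp, fun p hp => absurd ⟨p, hp⟩ h0⟩


private lemma cube_pigeon {R B G : Type*} (f0 g h k e : R × B × G)
    (hga : g.1 ≠ f0.1) (hgb : g.2.1 ≠ f0.2.1) (hgc : g.2.2 = f0.2.2)
    (hha : h.1 = g.1) (hhb : h.2.1 = f0.2.1) (hhc : h.2.2 ≠ f0.2.2)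
    (hka : k.1 = f0.1) (hkb : k.2.1 = g.2.1) (hkc : k.2.2 = h.2.2)
    (h1 : Intersect3 e f0) (h2 : Intersect3 e g) (h3 : Intersect3 e h) (h4 : Intersect3 e k) :
    (e.1 = f0.1 ∧ e.2.1 = f0.2.1 ∧ e.2.2 = f0.2.2) ∨
    (e.1 = g.1 ∧ e.2.1 = g.2.1 ∧ e.2.2 = g.2.2) ∨
    (e.1 = h.1 ∧ e.2.1 = h.2.1 ∧ e.2.2 = h.2.2) ∨
    (e.1 = k.1 ∧ e.2.1 = k.2.1 ∧ e.2.2 = k.2.2) := by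
  unfold Intersect3 at h1 h2 h3 h4
  rcases h1 with h1 | h1 | h1 <;> rcases h2 with h2 | h2 | h2 <;>
    rcases h3 with h3 | h3 | h3 <;> rcases h4 with h4 | h4 | h4 <;> simp_all

/-- A triangle-family member meeting `X` (which avoids the core) must be one of
the three distinguished edges `F1 F2 F3`. -/
private lemma tri_TX {R B G : Type*} (a : R) (b : B) (c : G) (X t : R × B × G)
    (hXa : X.1 ≠ a) (hXb : X.2.1 ≠ b) (hXc : X.2.2 ≠ c)
    (hT : (t.1 = a ∧ t.2.1 = b) ∨ (t.1 = a ∧ t.2.2 = c) ∨ (t.2.1 = b ∧ t.2.2 = c))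
    (hI : Intersect3 t X) :
    (t.1 = X.1 ∧ t.2.1 = b ∧ t.2.2 = c) ∨
    (t.1 = a ∧ t.2.1 = X.2.1 ∧ t.2.2 = c) ∨
    (t.1 = a ∧ t.2.1 = b ∧ t.2.2 = X.2.2) := by
  unfold Intersect3 at hI
  rcases hT with ⟨u, v⟩ | ⟨u, v⟩ | ⟨u, v⟩ <;> rcases hI with w | w | w <;> simp_all

/-- Pigeonhole for the triangle case: an edge meeting `F1, F2, F3` lies in the
triangle family or coincides with `X`. -/
private lemma tri_gfull {R B G : Type*} (a : R) (b : B) (c : G) (X e : R × B × G)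
    (hXa : X.1 ≠ a) (hXb : X.2.1 ≠ b) (hXc : X.2.2 ≠ c)
    (h1 : e.1 = X.1 ∨ e.2.1 = b ∨ e.2.2 = c)
    (h2 : e.1 = a ∨ e.2.1 = X.2.1 ∨ e.2.2 = c)
    (h3 : e.1 = a ∨ e.2.1 = b ∨ e.2.2 = X.2.2) :
    ((e.1 = a ∧ e.2.1 = b) ∨ (e.1 = a ∧ e.2.2 = c) ∨ (e.2.1 = b ∧ e.2.2 = c)) ∨
    (e.1 = X.1 ∧ e.2.1 = X.2.1 ∧ e.2.2 = X.2.2) := by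
  rcases h1 with h1 | h1 | h1 <;> rcases h2 with h2 | h2 | h2 <;>
    rcases h3 with h3 | h3 | h3 <;> simp_all


section Star
variable {R B G : Type*} (m : ℕ) (Hs : ℕ → Set (R × B × G))

private lemma star1_case
    (hP1 : ∀ e1 ∈ Hs 0, ∀ e2 ∈ Hs 0, ∀ e3 ∈ Hs 0,
      ∃ f ∈ Hs m, Intersect3 f e1 ∧ Intersect3 f e2 ∧ Intersect3 f e3)
    (a : R) (hstar : ∀ g ∈ Hs m, g.1 = a) :
    ∃ S : Finset (R ⊕ B ⊕ G), S.card ≤ 3 ∧ ∀ e ∈ Hs 0, ∃ v ∈ S, Mem3 v e := by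
  classical
  set P : Set (B × G) := {p | ∃ x ∈ Hs 0, x.1 ≠ a ∧ x.2.1 = p.1 ∧ x.2.2 = p.2} with hPdef
  have h3 : ∀ p ∈ P, ∀ q ∈ P, ∀ r ∈ P,
      p.1 = q.1 ∨ p.2 = q.2 ∨ p.1 = r.1 ∨ p.2 = r.2 ∨ q.1 = r.1 ∨ q.2 = r.2 := by
    rintro p ⟨e1, he1, he1a, hp1, hp2⟩ q ⟨e2, he2, he2a, hq1, hq2⟩ r ⟨e3, he3, he3a, hr1, hr2⟩
    obtain ⟨f, hfm, I1, I2, I3⟩ := hP1 e1 he1 e2 he2 e3 he3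
    have hfa : f.1 = a := hstar f hfm
    have hp : p.1 = f.2.1 ∨ p.2 = f.2.2 := by
      rcases I1 with hI | hI | hI
      · exact absurd (hI.symm.trans hfa) he1a
      · exact Or.inl (hp1.symm.trans hI.symm)
      · exact Or.inr (hp2.symm.trans hI.symm)
    have hq : q.1 = f.2.1 ∨ q.2 = f.2.2 := by
      rcases I2 with hI | hI | hI
      · exact absurd (hI.symm.trans hfa) he2a
      · exact Or.inl (hq1.symm.trans hI.symm)
      · exact Or.inr (hq2.symm.trans hI.symm)
    have hr : r.1 = f.2.1 ∨ r.2 = f.2.2 := by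
      rcases I3 with hI | hI | hI
      · exact absurd (hI.symm.trans hfa) he3a
      · exact Or.inl (hr1.symm.trans hI.symm)
      · exact Or.inr (hr2.symm.trans hI.symm)
    rcases hp with hp | hp <;> rcases hq with hq | hq <;> rcases hr with hr | hr <;>
      first
      | exact Or.inl (hp.trans hq.symm)
      | exact Or.inr (Or.inl (hp.trans hq.symm))
      | exact Or.inr (Or.inr (Or.inl (hp.trans hr.symm)))
      | exact Or.inr (Or.inr (Or.inr (Or.inl (hp.trans hr.symm))))
      | exact Or.inr (Or.inr (Or.inr (Or.inr (Or.inl (hq.trans hr.symm)))))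
      | exact Or.inr (Or.inr (Or.inr (Or.inr (Or.inr (hq.trans hr.symm)))))
  obtain ⟨S2, hS2card, hS2cov⟩ := konig2 P h3
  refine ⟨insert (Sum.inl a) (S2.map ⟨Sum.inr, Sum.inr_injective⟩), ?_, ?_⟩
  · have hins := Finset.card_insert_le (α := R ⊕ B ⊕ G) (Sum.inl a)
      (S2.map ⟨Sum.inr, Sum.inr_injective⟩)
    simp only [Finset.card_map] at hins
    omega
  · intro e he
    by_cases hea : e.1 = a
    · exact ⟨Sum.inl a, Finset.mem_insert_self _ _, hea⟩
    · have hmem : ((e.2.1, e.2.2) : B × G) ∈ P := ⟨e, he, hea, rfl, rfl⟩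
      obtain ⟨w, hwS, hw⟩ := hS2cov _ hmem
      refine ⟨Sum.inr w, Finset.mem_insert_of_mem ?_, ?_⟩
      · exact Finset.mem_map_of_mem _ hwS
      · cases w with
        | inl bb => exact hw
        | inr gg => exact hw

private lemma star2_case
    (hP1 : ∀ e1 ∈ Hs 0, ∀ e2 ∈ Hs 0, ∀ e3 ∈ Hs 0,
      ∃ f ∈ Hs m, Intersect3 f e1 ∧ Intersect3 f e2 ∧ Intersect3 f e3)
    (a : B) (hstar : ∀ g ∈ Hs m, g.2.1 = a) :
    ∃ S : Finset (R ⊕ B ⊕ G), S.card ≤ 3 ∧ ∀ e ∈ Hs 0, ∃ v ∈ S, Mem3 v e := by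
  classical
  set P : Set (R × G) := {p | ∃ x ∈ Hs 0, x.2.1 ≠ a ∧ x.1 = p.1 ∧ x.2.2 = p.2} with hPdef
  have h3 : ∀ p ∈ P, ∀ q ∈ P, ∀ r ∈ P,
      p.1 = q.1 ∨ p.2 = q.2 ∨ p.1 = r.1 ∨ p.2 = r.2 ∨ q.1 = r.1 ∨ q.2 = r.2 := by
    rintro p ⟨e1, he1, he1a, hp1, hp2⟩ q ⟨e2, he2, he2a, hq1, hq2⟩ r ⟨e3, he3, he3a, hr1, hr2⟩
    obtain ⟨f, hfm, I1, I2, I3⟩ := hP1 e1 he1 e2 he2 e3 he3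
    have hfa : f.2.1 = a := hstar f hfm
    have hp : p.1 = f.1 ∨ p.2 = f.2.2 := by
      rcases I1 with hI | hI | hI
      · exact Or.inl (hp1.symm.trans hI.symm)
      · exact absurd (hI.symm.trans hfa) he1a
      · exact Or.inr (hp2.symm.trans hI.symm)
    have hq : q.1 = f.1 ∨ q.2 = f.2.2 := by
      rcases I2 with hI | hI | hI
      · exact Or.inl (hq1.symm.trans hI.symm)
      · exact absurd (hI.symm.trans hfa) he2a
      · exact Or.inr (hq2.symm.trans hI.symm)
    have hr : r.1 = f.1 ∨ r.2 = f.2.2 := by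
      rcases I3 with hI | hI | hI
      · exact Or.inl (hr1.symm.trans hI.symm)
      · exact absurd (hI.symm.trans hfa) he3a
      · exact Or.inr (hr2.symm.trans hI.symm)
    rcases hp with hp | hp <;> rcases hq with hq | hq <;> rcases hr with hr | hr <;>
      first
      | exact Or.inl (hp.trans hq.symm)
      | exact Or.inr (Or.inl (hp.trans hq.symm))
      | exact Or.inr (Or.inr (Or.inl (hp.trans hr.symm)))
      | exact Or.inr (Or.inr (Or.inr (Or.inl (hp.trans hr.symm))))
      | exact Or.inr (Or.inr (Or.inr (Or.inr (Or.inl (hq.trans hr.symm)))))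
      | exact Or.inr (Or.inr (Or.inr (Or.inr (Or.inr (hq.trans hr.symm)))))
  obtain ⟨S2, hS2card, hS2cov⟩ := konig2 P h3
  let emb : R ⊕ G ↪ R ⊕ B ⊕ G :=
    Function.Embedding.sumMap (Function.Embedding.refl R) ⟨Sum.inr, Sum.inr_injective⟩
  refine ⟨insert (Sum.inr (Sum.inl a)) (S2.map emb), ?_, ?_⟩
  · have hins := Finset.card_insert_le (α := R ⊕ B ⊕ G) (Sum.inr (Sum.inl a)) (S2.map emb)
    simp only [Finset.card_map] at hins
    omega
  · intro e he
    by_cases hea : e.2.1 = a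
    · exact ⟨Sum.inr (Sum.inl a), Finset.mem_insert_self _ _, hea⟩
    · have hmem : ((e.1, e.2.2) : R × G) ∈ P := ⟨e, he, hea, rfl, rfl⟩
      obtain ⟨w, hwS, hw⟩ := hS2cov _ hmem
      refine ⟨emb w, Finset.mem_insert_of_mem (Finset.mem_map_of_mem _ hwS), ?_⟩
      cases w with
      | inl rr => exact hw
      | inr gg => exact hw

private lemma star3_case
    (hP1 : ∀ e1 ∈ Hs 0, ∀ e2 ∈ Hs 0, ∀ e3 ∈ Hs 0,
      ∃ f ∈ Hs m, Intersect3 f e1 ∧ Intersect3 f e2 ∧ Intersect3 f e3)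
    (a : G) (hstar : ∀ g ∈ Hs m, g.2.2 = a) :
    ∃ S : Finset (R ⊕ B ⊕ G), S.card ≤ 3 ∧ ∀ e ∈ Hs 0, ∃ v ∈ S, Mem3 v e := by
  classical
  set P : Set (R × B) := {p | ∃ x ∈ Hs 0, x.2.2 ≠ a ∧ x.1 = p.1 ∧ x.2.1 = p.2} with hPdef
  have h3 : ∀ p ∈ P, ∀ q ∈ P, ∀ r ∈ P,
      p.1 = q.1 ∨ p.2 = q.2 ∨ p.1 = r.1 ∨ p.2 = r.2 ∨ q.1 = r.1 ∨ q.2 = r.2 := by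
    rintro p ⟨e1, he1, he1a, hp1, hp2⟩ q ⟨e2, he2, he2a, hq1, hq2⟩ r ⟨e3, he3, he3a, hr1, hr2⟩
    obtain ⟨f, hfm, I1, I2, I3⟩ := hP1 e1 he1 e2 he2 e3 he3
    have hfa : f.2.2 = a := hstar f hfm
    have hp : p.1 = f.1 ∨ p.2 = f.2.1 := by
      rcases I1 with hI | hI | hI
      · exact Or.inl (hp1.symm.trans hI.symm)
      · exact Or.inr (hp2.symm.trans hI.symm)
      · exact absurd (hI.symm.trans hfa) he1a
    have hq : q.1 = f.1 ∨ q.2 = f.2.1 := by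
      rcases I2 with hI | hI | hI
      · exact Or.inl (hq1.symm.trans hI.symm)
      · exact Or.inr (hq2.symm.trans hI.symm)
      · exact absurd (hI.symm.trans hfa) he2a
    have hr : r.1 = f.1 ∨ r.2 = f.2.1 := by
      rcases I3 with hI | hI | hI
      · exact Or.inl (hr1.symm.trans hI.symm)
      · exact Or.inr (hr2.symm.trans hI.symm)
      · exact absurd (hI.symm.trans hfa) he3a
    rcases hp with hp | hp <;> rcases hq with hq | hq <;> rcases hr with hr | hr <;>
      first
      | exact Or.inl (hp.trans hq.symm)
      | exact Or.inr (Or.inl (hp.trans hq.symm))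
      | exact Or.inr (Or.inr (Or.inl (hp.trans hr.symm)))
      | exact Or.inr (Or.inr (Or.inr (Or.inl (hp.trans hr.symm))))
      | exact Or.inr (Or.inr (Or.inr (Or.inr (Or.inl (hq.trans hr.symm)))))
      | exact Or.inr (Or.inr (Or.inr (Or.inr (Or.inr (hq.trans hr.symm)))))
  obtain ⟨S2, hS2card, hS2cov⟩ := konig2 P h3
  let emb : R ⊕ B ↪ R ⊕ B ⊕ G :=
    Function.Embedding.sumMap (Function.Embedding.refl R) ⟨Sum.inl, Sum.inl_injective⟩
  refine ⟨insert (Sum.inr (Sum.inr a)) (S2.map emb), ?_, ?_⟩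
  · have hins := Finset.card_insert_le (α := R ⊕ B ⊕ G) (Sum.inr (Sum.inr a)) (S2.map emb)
    simp only [Finset.card_map] at hins
    omega
  · intro e he
    by_cases hea : e.2.2 = a
    · exact ⟨Sum.inr (Sum.inr a), Finset.mem_insert_self _ _, hea⟩
    · have hmem : ((e.1, e.2.1) : R × B) ∈ P := ⟨e, he, hea, rfl, rfl⟩
      obtain ⟨w, hwS, hw⟩ := hS2cov _ hmem
      refine ⟨emb w, Finset.mem_insert_of_mem (Finset.mem_map_of_mem _ hwS), ?_⟩
      cases w with
      | inl rr => exact hw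
      | inr bb => exact hw

end Star


private lemma card3 {α : Type*} [DecidableEq α] (v1 v2 v3 : α) :
    ({v1, v2, v3} : Finset α).card ≤ 3 := by
  refine (Finset.card_insert_le _ _).trans ?_
  have h2 := Finset.card_insert_le v2 ({v3} : Finset α)
  simp only [Finset.card_singleton] at h2
  omega

section Cases
variable {R B G : Type*} (m : ℕ) (Hs : ℕ → Set (R × B × G))

private lemma oracle_of_no_cover
    (hno : ∀ S : Finset (R ⊕ B ⊕ G), S.card ≤ 3 → ∃ e ∈ Hs 0, ∀ v ∈ S, ¬Mem3 v e) :
    ∀ (x : R) (y : B) (z : G), ∃ e ∈ Hs 0, e.1 ≠ x ∧ e.2.1 ≠ y ∧ e.2.2 ≠ z := by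
  classical
  intro x y z
  obtain ⟨e, he, hv⟩ := hno {Sum.inl x, Sum.inr (Sum.inl y), Sum.inr (Sum.inr z)} (card3 _ _ _)
  refine ⟨e, he, ?_, ?_, ?_⟩
  · exact hv (Sum.inl x) (by simp)
  · exact hv (Sum.inr (Sum.inl y)) (by simp)
  · exact hv (Sum.inr (Sum.inr z)) (by simp)

private lemma triangle_case (hm : 1 ≤ m)
    (hP2 : ∀ e1 ∈ Hs 0, ∀ e2 ∈ Hs 0, ∀ e3 ∈ Hs 0, ∀ i < m, ∀ e4 ∈ Hs i,
      ∃ f ∈ Hs (i + 1),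
        Intersect3 f e1 ∧ Intersect3 f e2 ∧ Intersect3 f e3 ∧ Intersect3 f e4)
    (a : R) (b : B) (c : G)
    (hMT : ∀ t ∈ Hs m,
      (t.1 = a ∧ t.2.1 = b) ∨ (t.1 = a ∧ t.2.2 = c) ∨ (t.2.1 = b ∧ t.2.2 = c)) :
    ∃ S : Finset (R ⊕ B ⊕ G), S.card ≤ 3 ∧ ∀ e ∈ Hs 0, ∃ v ∈ S, Mem3 v e := by
  classical
  by_contra hno
  push_neg at hno
  have orc := oracle_of_no_cover Hs hno
  obtain ⟨X, hX0, hXa, hXb, hXc⟩ := orc a b c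
  obtain ⟨Q1, hQ10, hQ1a, hQ1b, hQ1c⟩ := orc X.1 b c
  obtain ⟨Q2, hQ20, hQ2a, hQ2b, hQ2c⟩ := orc a X.2.1 c
  obtain ⟨Q3, hQ30, hQ3a, hQ3b, hQ3c⟩ := orc a b X.2.2
  have kill1 : ∀ t : R × B × G, t.1 = X.1 → t.2.1 = b → t.2.2 = c →
      Intersect3 t Q1 → False := by
    intro t h1 h2 h3 hI
    rcases hI with h | h | h
    · exact hQ1a (h.symm.trans h1)
    · exact hQ1b (h.symm.trans h2)
    · exact hQ1c (h.symm.trans h3)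
  have kill2 : ∀ t : R × B × G, t.1 = a → t.2.1 = X.2.1 → t.2.2 = c →
      Intersect3 t Q2 → False := by
    intro t h1 h2 h3 hI
    rcases hI with h | h | h
    · exact hQ2a (h.symm.trans h1)
    · exact hQ2b (h.symm.trans h2)
    · exact hQ2c (h.symm.trans h3)
  have kill3 : ∀ t : R × B × G, t.1 = a → t.2.1 = b → t.2.2 = X.2.2 →
      Intersect3 t Q3 → False := by
    intro t h1 h2 h3 hI
    rcases hI with h | h | h
    · exact hQ3a (h.symm.trans h1)
    · exact hQ3b (h.symm.trans h2)
    · exact hQ3c (h.symm.trans h3)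
  have key : ∀ k, k ≤ m → ∀ e ∈ Hs (m - k),
      (e.1 = a ∧ e.2.1 = b) ∨ (e.1 = a ∧ e.2.2 = c) ∨ (e.2.1 = b ∧ e.2.2 = c) := by
    intro k
    induction k with
    | zero =>
      intro _ e he
      exact hMT e (by simpa using he)
    | succ k ih =>
      intro hk e4 he4
      have hik : m - (k + 1) < m := by omega
      have hstep : m - (k + 1) + 1 = m - k := by omega
      have ihm := ih (by omega)
      -- pin to F1 via triple (X, Q2, Q3)
      have hA1 : e4.1 = X.1 ∨ e4.2.1 = b ∨ e4.2.2 = c := by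
        obtain ⟨f1, hf1, hIX, hIQ2, hIQ3, hIe⟩ := hP2 X hX0 Q2 hQ20 Q3 hQ30 _ hik e4 he4
        rw [hstep] at hf1
        rcases tri_TX a b c X f1 hXa hXb hXc (ihm f1 hf1) hIX with hF | hF | hF
        · rcases hIe with h | h | h
          · exact Or.inl (h.symm.trans hF.1)
          · exact Or.inr (Or.inl (h.symm.trans hF.2.1))
          · exact Or.inr (Or.inr (h.symm.trans hF.2.2))
        · exact absurd hIQ2 (fun hI => kill2 f1 hF.1 hF.2.1 hF.2.2 hI)
        · exact absurd hIQ3 (fun hI => kill3 f1 hF.1 hF.2.1 hF.2.2 hI)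
      have hA2 : e4.1 = a ∨ e4.2.1 = X.2.1 ∨ e4.2.2 = c := by
        obtain ⟨f1, hf1, hIX, hIQ1, hIQ3, hIe⟩ := hP2 X hX0 Q1 hQ10 Q3 hQ30 _ hik e4 he4
        rw [hstep] at hf1
        rcases tri_TX a b c X f1 hXa hXb hXc (ihm f1 hf1) hIX with hF | hF | hF
        · exact absurd hIQ1 (fun hI => kill1 f1 hF.1 hF.2.1 hF.2.2 hI)
        · rcases hIe with h | h | h
          · exact Or.inl (h.symm.trans hF.1)
          · exact Or.inr (Or.inl (h.symm.trans hF.2.1))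
          · exact Or.inr (Or.inr (h.symm.trans hF.2.2))
        · exact absurd hIQ3 (fun hI => kill3 f1 hF.1 hF.2.1 hF.2.2 hI)
      have hA3 : e4.1 = a ∨ e4.2.1 = b ∨ e4.2.2 = X.2.2 := by
        obtain ⟨f1, hf1, hIX, hIQ1, hIQ2, hIe⟩ := hP2 X hX0 Q1 hQ10 Q2 hQ20 _ hik e4 he4
        rw [hstep] at hf1
        rcases tri_TX a b c X f1 hXa hXb hXc (ihm f1 hf1) hIX with hF | hF | hF
        · exact absurd hIQ1 (fun hI => kill1 f1 hF.1 hF.2.1 hF.2.2 hI)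
        · exact absurd hIQ2 (fun hI => kill2 f1 hF.1 hF.2.1 hF.2.2 hI)
        · rcases hIe with h | h | h
          · exact Or.inl (h.symm.trans hF.1)
          · exact Or.inr (Or.inl (h.symm.trans hF.2.1))
          · exact Or.inr (Or.inr (h.symm.trans hF.2.2))
      rcases tri_gfull a b c X e4 hXa hXb hXc hA1 hA2 hA3 with h | h
      · exact h
      · exfalso
        obtain ⟨f4, hf4, hJ1, hJ2, hJ3, hJe⟩ := hP2 Q1 hQ10 Q2 hQ20 Q3 hQ30 _ hik e4 he4
        rw [hstep] at hf4
        have hIX4 : Intersect3 f4 X := by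
          rcases hJe with hh | hh | hh
          · exact Or.inl (hh.trans h.1)
          · exact Or.inr (Or.inl (hh.trans h.2.1))
          · exact Or.inr (Or.inr (hh.trans h.2.2))
        rcases tri_TX a b c X f4 hXa hXb hXc (ihm f4 hf4) hIX4 with hF | hF | hF
        · exact kill1 f4 hF.1 hF.2.1 hF.2.2 hJ1
        · exact kill2 f4 hF.1 hF.2.1 hF.2.2 hJ2
        · exact kill3 f4 hF.1 hF.2.1 hF.2.2 hJ3
  have hkey1 : ∀ e ∈ Hs 1,
      (e.1 = a ∧ e.2.1 = b) ∨ (e.1 = a ∧ e.2.2 = c) ∨ (e.2.1 = b ∧ e.2.2 = c) := by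
    have h := key (m - 1) (by omega)
    have heq : m - (m - 1) = 1 := by omega
    rwa [heq] at h
  obtain ⟨f4, hf4, hJ1, hJ2, hJ3, hJe⟩ := hP2 Q1 hQ10 Q2 hQ20 Q3 hQ30 0 hm X hX0
  rw [zero_add] at hf4
  rcases tri_TX a b c X f4 hXa hXb hXc (hkey1 f4 hf4) hJe with hF | hF | hF
  · exact kill1 f4 hF.1 hF.2.1 hF.2.2 hJ1
  · exact kill2 f4 hF.1 hF.2.1 hF.2.2 hJ2
  · exact kill3 f4 hF.1 hF.2.1 hF.2.2 hJ3

private lemma cube_case (hm : 1 ≤ m)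
    (hP2 : ∀ e1 ∈ Hs 0, ∀ e2 ∈ Hs 0, ∀ e3 ∈ Hs 0, ∀ i < m, ∀ e4 ∈ Hs i,
      ∃ f ∈ Hs (i + 1),
        Intersect3 f e1 ∧ Intersect3 f e2 ∧ Intersect3 f e3 ∧ Intersect3 f e4)
    (hP3 : ∀ e ∈ Hs m, ∀ f ∈ Hs m, Intersect3 e f)
    (f0 eg eh ek : R × B × G)
    (hf0 : f0 ∈ Hs m) (hgm : eg ∈ Hs m) (hhm : eh ∈ Hs m) (hkm : ek ∈ Hs m)
    (hga : eg.1 ≠ f0.1) (hgb : eg.2.1 ≠ f0.2.1) (hgc : eg.2.2 = f0.2.2)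
    (hha : eh.1 = eg.1) (hhb : eh.2.1 = f0.2.1) (hhc : eh.2.2 ≠ f0.2.2)
    (hka : ek.1 = f0.1) (hkb : ek.2.1 = eg.2.1) (hkc : ek.2.2 = eh.2.2) :
    ∃ S : Finset (R ⊕ B ⊕ G), S.card ≤ 3 ∧ ∀ e ∈ Hs 0, ∃ v ∈ S, Mem3 v e := by
  classical
  by_contra hno
  push_neg at hno
  have orc := oracle_of_no_cover Hs hno
  obtain ⟨Qf, hQf0, hQfa, hQfb, hQfc⟩ := orc f0.1 f0.2.1 f0.2.2
  obtain ⟨Qg, hQg0, hQga, hQgb, hQgc⟩ := orc eg.1 eg.2.1 eg.2.2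
  obtain ⟨Qh, hQh0, hQha, hQhb, hQhc⟩ := orc eh.1 eh.2.1 eh.2.2
  obtain ⟨Qk, hQk0, hQka, hQkb, hQkc⟩ := orc ek.1 ek.2.1 ek.2.2
  have killf : ∀ t : R × B × G, t.1 = f0.1 → t.2.1 = f0.2.1 → t.2.2 = f0.2.2 →
      Intersect3 t Qf → False := by
    intro t h1 h2 h3 hI
    rcases hI with h | h | h
    · exact hQfa (h.symm.trans h1)
    · exact hQfb (h.symm.trans h2)
    · exact hQfc (h.symm.trans h3)
  have killg : ∀ t : R × B × G, t.1 = eg.1 → t.2.1 = eg.2.1 → t.2.2 = eg.2.2 →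
      Intersect3 t Qg → False := by
    intro t h1 h2 h3 hI
    rcases hI with h | h | h
    · exact hQga (h.symm.trans h1)
    · exact hQgb (h.symm.trans h2)
    · exact hQgc (h.symm.trans h3)
  have killh : ∀ t : R × B × G, t.1 = eh.1 → t.2.1 = eh.2.1 → t.2.2 = eh.2.2 →
      Intersect3 t Qh → False := by
    intro t h1 h2 h3 hI
    rcases hI with h | h | h
    · exact hQha (h.symm.trans h1)
    · exact hQhb (h.symm.trans h2)
    · exact hQhc (h.symm.trans h3)
  have killk : ∀ t : R × B × G, t.1 = ek.1 → t.2.1 = ek.2.1 → t.2.2 = ek.2.2 →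
      Intersect3 t Qk → False := by
    intro t h1 h2 h3 hI
    rcases hI with h | h | h
    · exact hQka (h.symm.trans h1)
    · exact hQkb (h.symm.trans h2)
    · exact hQkc (h.symm.trans h3)
  have key : ∀ kk, kk ≤ m → ∀ e ∈ Hs (m - kk),
      Intersect3 e f0 ∧ Intersect3 e eg ∧ Intersect3 e eh ∧ Intersect3 e ek := by
    intro kk
    induction kk with
    | zero =>
      intro _ e he
      have he' : e ∈ Hs m := by simpa using he
      exact ⟨hP3 e he' f0 hf0, hP3 e he' eg hgm, hP3 e he' eh hhm, hP3 e he' ek hkm⟩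
    | succ kk ih =>
      intro hk e4 he4
      have hik : m - (kk + 1) < m := by omega
      have hstep : m - (kk + 1) + 1 = m - kk := by omega
      have ihm := ih (by omega)
      have pinf : Intersect3 e4 f0 := by
        obtain ⟨f', hf', hJg, hJh, hJk, hJe⟩ := hP2 Qg hQg0 Qh hQh0 Qk hQk0 _ hik e4 he4
        rw [hstep] at hf'
        obtain ⟨c1, c2, c3, c4⟩ := ihm f' hf'
        rcases cube_pigeon f0 eg eh ek f' hga hgb hgc hha hhb hhc hka hkb hkc c1 c2 c3 c4
          with hc | hc | hc | hc
        · rcases hJe with h | h | h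
          · exact Or.inl (h.symm.trans hc.1)
          · exact Or.inr (Or.inl (h.symm.trans hc.2.1))
          · exact Or.inr (Or.inr (h.symm.trans hc.2.2))
        · exact absurd hJg (fun hI => killg f' hc.1 hc.2.1 hc.2.2 hI)
        · exact absurd hJh (fun hI => killh f' hc.1 hc.2.1 hc.2.2 hI)
        · exact absurd hJk (fun hI => killk f' hc.1 hc.2.1 hc.2.2 hI)
      have ping : Intersect3 e4 eg := by
        obtain ⟨f', hf', hJf, hJh, hJk, hJe⟩ := hP2 Qf hQf0 Qh hQh0 Qk hQk0 _ hik e4 he4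
        rw [hstep] at hf'
        obtain ⟨c1, c2, c3, c4⟩ := ihm f' hf'
        rcases cube_pigeon f0 eg eh ek f' hga hgb hgc hha hhb hhc hka hkb hkc c1 c2 c3 c4
          with hc | hc | hc | hc
        · exact absurd hJf (fun hI => killf f' hc.1 hc.2.1 hc.2.2 hI)
        · rcases hJe with h | h | h
          · exact Or.inl (h.symm.trans hc.1)
          · exact Or.inr (Or.inl (h.symm.trans hc.2.1))
          · exact Or.inr (Or.inr (h.symm.trans hc.2.2))
        · exact absurd hJh (fun hI => killh f' hc.1 hc.2.1 hc.2.2 hI)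
        · exact absurd hJk (fun hI => killk f' hc.1 hc.2.1 hc.2.2 hI)
      have pinh : Intersect3 e4 eh := by
        obtain ⟨f', hf', hJf, hJg, hJk, hJe⟩ := hP2 Qf hQf0 Qg hQg0 Qk hQk0 _ hik e4 he4
        rw [hstep] at hf'
        obtain ⟨c1, c2, c3, c4⟩ := ihm f' hf'
        rcases cube_pigeon f0 eg eh ek f' hga hgb hgc hha hhb hhc hka hkb hkc c1 c2 c3 c4
          with hc | hc | hc | hc
        · exact absurd hJf (fun hI => killf f' hc.1 hc.2.1 hc.2.2 hI)
        · exact absurd hJg (fun hI => killg f' hc.1 hc.2.1 hc.2.2 hI)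
        · rcases hJe with h | h | h
          · exact Or.inl (h.symm.trans hc.1)
          · exact Or.inr (Or.inl (h.symm.trans hc.2.1))
          · exact Or.inr (Or.inr (h.symm.trans hc.2.2))
        · exact absurd hJk (fun hI => killk f' hc.1 hc.2.1 hc.2.2 hI)
      have pink : Intersect3 e4 ek := by
        obtain ⟨f', hf', hJf, hJg, hJh, hJe⟩ := hP2 Qf hQf0 Qg hQg0 Qh hQh0 _ hik e4 he4
        rw [hstep] at hf'
        obtain ⟨c1, c2, c3, c4⟩ := ihm f' hf'
        rcases cube_pigeon f0 eg eh ek f' hga hgb hgc hha hhb hhc hka hkb hkc c1 c2 c3 c4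
          with hc | hc | hc | hc
        · exact absurd hJf (fun hI => killf f' hc.1 hc.2.1 hc.2.2 hI)
        · exact absurd hJg (fun hI => killg f' hc.1 hc.2.1 hc.2.2 hI)
        · exact absurd hJh (fun hI => killh f' hc.1 hc.2.1 hc.2.2 hI)
        · rcases hJe with h | h | h
          · exact Or.inl (h.symm.trans hc.1)
          · exact Or.inr (Or.inl (h.symm.trans hc.2.1))
          · exact Or.inr (Or.inr (h.symm.trans hc.2.2))
      exact ⟨pinf, ping, pinh, pink⟩
  have hkey1 : ∀ e ∈ Hs 1,
      Intersect3 e f0 ∧ Intersect3 e eg ∧ Intersect3 e eh ∧ Intersect3 e ek := by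
    have h := key (m - 1) (by omega)
    have heq : m - (m - 1) = 1 := by omega
    rwa [heq] at h
  obtain ⟨f', hf', hJg, hJh, hJk, hJe⟩ := hP2 Qg hQg0 Qh hQh0 Qk hQk0 0 hm Qf hQf0
  rw [zero_add] at hf'
  obtain ⟨c1, c2, c3, c4⟩ := hkey1 f' hf'
  rcases cube_pigeon f0 eg eh ek f' hga hgb hgc hha hhb hhc hka hkb hkc c1 c2 c3 c4
    with hc | hc | hc | hc
  · exact killf f' hc.1 hc.2.1 hc.2.2 hJe
  · exact killg f' hc.1 hc.2.1 hc.2.2 hJg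
  · exact killh f' hc.1 hc.2.1 hc.2.2 hJh
  · exact killk f' hc.1 hc.2.1 hc.2.2 hJk

end Cases


/-- If a 3-partite 3-uniform hypergraph `H` (with edge set `Hs 0`) is
`(4,m)`-coverable, witnessed by the chain `Hs 0 ⊇ Hs 1 ⊇ ... ⊇ Hs m`
satisfying P1, P2, P3, then `τ(H) ≤ 3`. -/
theorem stmt_8 {R B G : Type*} (m : ℕ) (hm : 1 ≤ m) (Hs : ℕ → Set (R × B × G))
    (hchain : ∀ i < m, Hs (i + 1) ⊆ Hs i)
    (hP1 : ∀ e1 ∈ Hs 0, ∀ e2 ∈ Hs 0, ∀ e3 ∈ Hs 0,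
      ∃ f ∈ Hs m, Intersect3 f e1 ∧ Intersect3 f e2 ∧ Intersect3 f e3)
    (hP2 : ∀ e1 ∈ Hs 0, ∀ e2 ∈ Hs 0, ∀ e3 ∈ Hs 0, ∀ i < m, ∀ e4 ∈ Hs i,
      ∃ f ∈ Hs (i + 1),
        Intersect3 f e1 ∧ Intersect3 f e2 ∧ Intersect3 f e3 ∧ Intersect3 f e4)
    (hP3 : ∀ e ∈ Hs m, ∀ f ∈ Hs m, Intersect3 e f) :
    ∃ S : Finset (R ⊕ B ⊕ G), S.card ≤ 3 ∧ ∀ e ∈ Hs 0, ∃ v ∈ S, Mem3 v e := by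
  classical
  by_cases hne : ∃ e, e ∈ Hs 0
  swap
  · exact ⟨∅, by simp, fun e he => absurd ⟨e, he⟩ hne⟩
  obtain ⟨e0, he0⟩ := hne
  obtain ⟨f0, hf0, -⟩ := hP1 e0 he0 e0 he0 e0 he0
  by_cases hA : ∀ g ∈ Hs m, g.1 = f0.1
  · exact star1_case m Hs hP1 f0.1 hA
  by_cases hB : ∀ g ∈ Hs m, g.2.1 = f0.2.1
  · exact star2_case m Hs hP1 f0.2.1 hB
  by_cases hC : ∀ g ∈ Hs m, g.2.2 = f0.2.2
  · exact star3_case m Hs hP1 f0.2.2 hC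
  by_cases hab : ∀ g ∈ Hs m, g.1 = f0.1 ∨ g.2.1 = f0.2.1
  · -- triangle case with core (f0.1, f0.2.1, q.2.2)
    push_neg at hA hB
    obtain ⟨p, hpM, hp⟩ := hA
    obtain ⟨q, hqM, hq⟩ := hB
    have hpb : p.2.1 = f0.2.1 := (hab p hpM).resolve_left hp
    have hqa : q.1 = f0.1 := (hab q hqM).resolve_right hq
    have hc' : q.2.2 = p.2.2 := by
      rcases hP3 q hqM p hpM with h | h | h
      · exact absurd (h.symm.trans hqa) hp
      · exact absurd (h.trans hpb) hq
      · exact h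
    apply triangle_case m Hs hm hP2 f0.1 f0.2.1 q.2.2
    intro t htM
    rcases hab t htM with hta | htb
    · by_cases htb2 : t.2.1 = f0.2.1
      · exact Or.inl ⟨hta, htb2⟩
      · have h3 : t.2.2 = p.2.2 := by
          rcases hP3 t htM p hpM with h | h | h
          · exact absurd (h.symm.trans hta) hp
          · exact absurd (h.trans hpb) htb2
          · exact h
        exact Or.inr (Or.inl ⟨hta, h3.trans hc'.symm⟩)
    · by_cases hta2 : t.1 = f0.1
      · exact Or.inl ⟨hta2, htb⟩
      · have h3 : t.2.2 = q.2.2 := by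
          rcases hP3 t htM q hqM with h | h | h
          · exact absurd (h.trans hqa) hta2
          · exact absurd (h.symm.trans htb) hq
          · exact h
        exact Or.inr (Or.inr ⟨htb, h3⟩)
  by_cases hac : ∀ g ∈ Hs m, g.1 = f0.1 ∨ g.2.2 = f0.2.2
  · -- triangle case with core (f0.1, q.2.1, f0.2.2)
    push_neg at hA hC
    obtain ⟨p, hpM, hp⟩ := hA
    obtain ⟨q, hqM, hq⟩ := hC
    have hpc : p.2.2 = f0.2.2 := (hac p hpM).resolve_left hp
    have hqa : q.1 = f0.1 := (hac q hqM).resolve_right hq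
    have hb' : q.2.1 = p.2.1 := by
      rcases hP3 q hqM p hpM with h | h | h
      · exact absurd (h.symm.trans hqa) hp
      · exact h
      · exact absurd (h.trans hpc) hq
    apply triangle_case m Hs hm hP2 f0.1 q.2.1 f0.2.2
    intro t htM
    rcases hac t htM with hta | htc
    · by_cases htc2 : t.2.2 = f0.2.2
      · exact Or.inr (Or.inl ⟨hta, htc2⟩)
      · have h3 : t.2.1 = p.2.1 := by
          rcases hP3 t htM p hpM with h | h | h
          · exact absurd (h.symm.trans hta) hp
          · exact h
          · exact absurd (h.trans hpc) htc2
        exact Or.inl ⟨hta, h3.trans hb'.symm⟩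
    · by_cases hta2 : t.1 = f0.1
      · exact Or.inr (Or.inl ⟨hta2, htc⟩)
      · have h3 : t.2.1 = q.2.1 := by
          rcases hP3 t htM q hqM with h | h | h
          · exact absurd (h.trans hqa) hta2
          · exact h
          · exact absurd (h.symm.trans htc) hq
        exact Or.inr (Or.inr ⟨h3, htc⟩)
  by_cases hbc : ∀ g ∈ Hs m, g.2.1 = f0.2.1 ∨ g.2.2 = f0.2.2
  · -- triangle case with core (q.1, f0.2.1, f0.2.2)
    push_neg at hB hC
    obtain ⟨p, hpM, hp⟩ := hB
    obtain ⟨q, hqM, hq⟩ := hC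
    have hpc : p.2.2 = f0.2.2 := (hbc p hpM).resolve_left hp
    have hqb : q.2.1 = f0.2.1 := (hbc q hqM).resolve_right hq
    have ha' : q.1 = p.1 := by
      rcases hP3 q hqM p hpM with h | h | h
      · exact h
      · exact absurd (h.symm.trans hqb) hp
      · exact absurd (h.trans hpc) hq
    apply triangle_case m Hs hm hP2 q.1 f0.2.1 f0.2.2
    intro t htM
    rcases hbc t htM with htb | htc
    · by_cases htc2 : t.2.2 = f0.2.2
      · exact Or.inr (Or.inr ⟨htb, htc2⟩)
      · have h3 : t.1 = p.1 := by
          rcases hP3 t htM p hpM with h | h | h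
          · exact h
          · exact absurd (h.symm.trans htb) hp
          · exact absurd (h.trans hpc) htc2
        exact Or.inl ⟨h3.trans ha'.symm, htb⟩
    · by_cases htb2 : t.2.1 = f0.2.1
      · exact Or.inr (Or.inr ⟨htb2, htc⟩)
      · have h3 : t.1 = q.1 := by
          rcases hP3 t htM q hqM with h | h | h
          · exact h
          · exact absurd (h.trans hqb) htb2
          · exact absurd (h.symm.trans htc) hq
        exact Or.inr (Or.inl ⟨h3, htc⟩)
  · -- cube case
    push_neg at hab hac hbc
    obtain ⟨eg, hgm, hg1, hg2⟩ := hab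
    obtain ⟨eh, hhm, hh1, hh2⟩ := hac
    obtain ⟨ek, hkm, hk1, hk2⟩ := hbc
    have hgc : eg.2.2 = f0.2.2 := by
      rcases hP3 eg hgm f0 hf0 with h | h | h
      · exact absurd h hg1
      · exact absurd h hg2
      · exact h
    have hhb : eh.2.1 = f0.2.1 := by
      rcases hP3 eh hhm f0 hf0 with h | h | h
      · exact absurd h hh1
      · exact h
      · exact absurd h hh2
    have hka : ek.1 = f0.1 := by
      rcases hP3 ek hkm f0 hf0 with h | h | h
      · exact h
      · exact absurd h hk1
      · exact absurd h hk2
    have hha : eh.1 = eg.1 := by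
      rcases hP3 eh hhm eg hgm with h | h | h
      · exact h
      · exact absurd (h.symm.trans hhb) hg2
      · exact absurd (h.trans hgc) hh2
    have hkb : ek.2.1 = eg.2.1 := by
      rcases hP3 ek hkm eg hgm with h | h | h
      · exact absurd (h.symm.trans hka) hg1
      · exact h
      · exact absurd (h.trans hgc) hk2
    have hkc : ek.2.2 = eh.2.2 := by
      rcases hP3 ek hkm eh hhm with h | h | h
      · exact absurd (h.symm.trans hka) hh1
      · exact absurd (h.trans hhb) hk1
      · exact h
    exact cube_case m Hs hm hP2 hP3 f0 eg eh ek hf0 hgm hhm hkm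
      hg1 hg2 hgc hha hhb hh2 hka hkb hkc
end

section
/- Let H be a 3-partite 3-uniform hypergraph with parts V_R, V_B, V_G, let t ≤ τ(H), let T be a set of t vertices, and let A be one of the three parts. Then there exists a set F of τ(H) − t edges of H, each disjoint from T, such that any two distinct edges in F intersect only inside A. -/
/-- The cover number τ of a 3-partite 3-uniform hypergraph with edge set `E`. -/
noncomputable def coverNum3 {R B G : Type*} (E : Set (R × B × G)) : ℕ :=
  sInf {n | ∃ S : Finset (R ⊕ B ⊕ G), S.card = n ∧ ∀ e ∈ E, ∃ v ∈ S, Mem3 v e}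

/-- `OnlyIn a e f`: the edges `e` and `f` intersect only inside part `a`
(where `a = 0, 1, 2` indexes the parts R, B, G): in every other part their
vertices differ. -/
def OnlyIn {R B G : Type*} (a : Fin 3) (e f : R × B × G) : Prop :=
  (a ≠ 0 → e.1 ≠ f.1) ∧ (a ≠ 1 → e.2.1 ≠ f.2.1) ∧ (a ≠ 2 → e.2.2 ≠ f.2.2)

/-!
The edges of `H` that avoid `T`, projected to the two parts other than `A`, form a bipartite
multigraph. A vertex cover of it together with `T` covers `H`, so by König's theorem it has a
matching of size at least `τ(H) - |T|`; lifted back to `H`, such a matching consists of edges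
avoiding `T` that pairwise differ in both parts other than `A`.
-/

open Finset

namespace Bipartite

variable {α β : Type*} [DecidableEq α] [DecidableEq β]

def nbhd (Q : Finset (α × β)) (s : Finset α) : Finset β :=
  (Q.filter (·.1 ∈ s)).image Prod.snd

lemma mem_nbhd {Q : Finset (α × β)} {s : Finset α} {y : β} :
    y ∈ nbhd Q s ↔ ∃ x ∈ s, (x, y) ∈ Q := by
  simp only [nbhd, mem_image, mem_filter, Prod.exists]
  grind

@[simp]
lemma nbhd_empty (Q : Finset (α × β)) : nbhd Q ∅ = ∅ := by
  ext y
  simp [mem_nbhd]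

lemma nbhd_eq_biUnion (Q : Finset (α × β)) (s : Finset α) :
    nbhd Q s = s.biUnion fun x => nbhd Q {x} := by
  ext y
  simp [mem_nbhd]

-- Adjoining `d` new vertices adjacent to every `x : α` makes Hall's condition hold.
theorem exists_matching_of_card_le_card_nbhd_add [Fintype α] (Q : Finset (α × β)) (d : ℕ)
    (hQ : ∀ s : Finset α, #s ≤ #(nbhd Q s) + d) :
    ∃ M ⊆ Q, Set.InjOn Prod.fst (M : Set (α × β)) ∧ Set.InjOn Prod.snd (M : Set (α × β)) ∧
      Fintype.card α ≤ #M + d := by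
  let t : α → Finset (β ⊕ Fin d) := fun x => (nbhd Q {x}).map .inl ∪ univ.map .inr
  have hall : ∀ s : Finset α, #s ≤ #(s.biUnion t) := by
    intro s
    obtain rfl | ⟨x, hx⟩ := s.eq_empty_or_nonempty
    · simp
    have hsub : (nbhd Q s).map .inl ∪ univ.map .inr ⊆ s.biUnion t := by
      intro z hz
      simp only [mem_union, mem_map, nbhd_eq_biUnion Q s, mem_biUnion] at hz
      simp only [mem_biUnion, t, mem_union, mem_map]
      grind
    calc #s ≤ #(nbhd Q s) + d := hQ s
      _ = #((nbhd Q s).map .inl ∪ univ.map .inr) := by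
        rw [card_union_of_disjoint (by simp [disjoint_left])]
        simp
      _ ≤ #(s.biUnion t) := card_le_card hsub
  obtain ⟨g, hg, hgt⟩ := (all_card_le_biUnion_card_iff_exists_injective t).1 hall
  refine ⟨Q.filter fun p => g p.1 = .inl p.2, filter_subset _ _, ?_, ?_, ?_⟩
  · intro p hp q hq h
    simp only [coe_filter, Set.mem_ofPred_eq] at hp hq
    exact Prod.ext h (Sum.inl_injective (hp.2.symm.trans (h ▸ hq.2)))
  · intro p hp q hq h
    simp only [coe_filter, Set.mem_ofPred_eq] at hp hq
    exact Prod.ext (hg (hp.2.trans (h ▸ hq.2.symm))) h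
  · have himage : univ.image g ⊆
        (Q.filter fun p => g p.1 = .inl p.2).image (.inl ∘ Prod.snd) ∪ univ.map .inr := by
      intro z hz
      obtain ⟨x, -, rfl⟩ := mem_image.1 hz
      have := hgt x
      simp only [t, mem_union, mem_map, mem_nbhd, mem_singleton, Function.Embedding.inl_apply,
        Function.Embedding.inr_apply] at this
      simp only [mem_union, mem_image, mem_filter, mem_map, Function.comp_apply,
        Function.Embedding.inr_apply]
      rcases this with ⟨y, ⟨x, rfl, hxy⟩, hy⟩ | ⟨j, -, hj⟩
      · exact Or.inl ⟨(x, y), ⟨hxy, hy.symm⟩, hy⟩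
      · exact Or.inr ⟨j, mem_univ _, hj⟩
    calc Fintype.card α = #(univ.image g) := by rw [card_image_of_injective _ hg, card_univ]
      _ ≤ _ := (card_le_card himage).trans (card_union_le _ _)
      _ ≤ _ := by grw [card_image_le]; simp

theorem konig [Fintype α] (Q : Finset (α × β)) :
    ∃ M ⊆ Q, Set.InjOn Prod.fst (M : Set (α × β)) ∧ Set.InjOn Prod.snd (M : Set (α × β)) ∧
      ∃ (Ca : Finset α) (Cb : Finset β), (∀ p ∈ Q, p.1 ∈ Ca ∨ p.2 ∈ Cb) ∧ #Ca + #Cb ≤ #M := by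
  -- A set `S` of maximal deficiency `d = |S| - |N(S)|` yields the cover `(α \ S) ∪ N(S)` of
  -- size `|α| - d`, while deficiency Hall yields a matching of size at least `|α| - d`.
  obtain ⟨S, -, hS⟩ := (univ : Finset α).powerset.exists_max_image
    (fun s => (#s : ℤ) - #(nbhd Q s)) ⟨∅, empty_mem_powerset _⟩
  have hS₀ : #(nbhd Q S) ≤ #S := by
    have := hS ∅ (empty_mem_powerset _)
    simp only [card_empty, nbhd_empty] at this
    omega
  obtain ⟨M, hMQ, hM₁, hM₂, hM⟩ := exists_matching_of_card_le_card_nbhd_add Q (#S - #(nbhd Q S))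
    fun s => by have := hS s (mem_powerset.2 (subset_univ s)); omega
  refine ⟨M, hMQ, hM₁, hM₂, univ \ S, nbhd Q S, fun p hp => ?_, ?_⟩
  · by_cases h : p.1 ∈ S
    · exact .inr (mem_nbhd.2 ⟨p.1, h, hp⟩)
    · exact .inl (mem_sdiff.2 ⟨mem_univ _, h⟩)
  · rw [card_sdiff_of_subset (subset_univ S), card_univ]
    have := card_le_univ S
    omega

lemma exists_lift_matching {ε : Type*} (P : Finset ε) (u : ε → α) (w : ε → β)
    {M : Finset (α × β)} (hMP : M ⊆ P.image fun e => (u e, w e))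
    (hM₁ : Set.InjOn Prod.fst (M : Set (α × β))) (hM₂ : Set.InjOn Prod.snd (M : Set (α × β))) :
    ∃ F ⊆ P, Set.InjOn u (F : Set ε) ∧ Set.InjOn w (F : Set ε) ∧ #F = #M := by
  have hsurj : Set.SurjOn (fun e => (u e, w e)) (P : Set ε) (M : Set (α × β)) := fun m hm => by
    simpa using hMP hm
  obtain ⟨F, hFP, hinj, himg⟩ := exists_subset_injOn_image_eq_of_surjOn _ M hsurj
  have hmem : ∀ e ∈ F, (u e, w e) ∈ M := fun e he => himg ▸ mem_image_of_mem _ he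
  refine ⟨F, coe_subset.1 hFP, fun e he e' he' h => ?_, fun e he e' he' h => ?_, ?_⟩
  · exact hinj he he' (hM₁ (hmem e he) (hmem e' he') h)
  · exact hinj he he' (hM₂ (hmem e he) (hmem e' he') h)
  · rw [← himg, card_image_of_injOn hinj]

end Bipartite

section Hypergraph

variable {R B G : Type*}

def edgeVertex : Fin 3 → R × B × G → R ⊕ B ⊕ G
  | 0, e => .inl e.1
  | 1, e => .inr (.inl e.2.1)
  | 2, e => .inr (.inr e.2.2)

lemma mem3_edgeVertex (i : Fin 3) (e : R × B × G) : Mem3 (edgeVertex i e) e := by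
  fin_cases i <;> rfl

lemma onlyIn_of_edgeVertex_ne {a : Fin 3} {e f : R × B × G}
    (h₁ : edgeVertex (a + 1) e ≠ edgeVertex (a + 1) f)
    (h₂ : edgeVertex (a + 2) e ≠ edgeVertex (a + 2) f) : OnlyIn a e f := by
  fin_cases a <;> simp_all [OnlyIn, edgeVertex]

lemma coverNum3_le_card {E : Set (R × B × G)} {S : Finset (R ⊕ B ⊕ G)}
    (hS : ∀ e ∈ E, ∃ v ∈ S, Mem3 v e) : coverNum3 E ≤ #S :=
  Nat.sInf_le ⟨S, rfl, hS⟩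

theorem exists_matching_avoiding [Fintype R] [Fintype B] [Fintype G] (E : Set (R × B × G))
    (T : Finset (R ⊕ B ⊕ G)) {u w : R × B × G → R ⊕ B ⊕ G} (hu : ∀ e, Mem3 (u e) e)
    (hw : ∀ e, Mem3 (w e) e) :
    ∃ F : Finset (R × B × G), #F = coverNum3 E - #T ∧ (F : Set (R × B × G)) ⊆ E ∧
      (∀ e ∈ F, ∀ v ∈ T, ¬ Mem3 v e) ∧
      Set.InjOn u (F : Set (R × B × G)) ∧ Set.InjOn w (F : Set (R × B × G)) := by
  classical
  let P : Finset (R × B × G) := univ.filter fun e => e ∈ E ∧ ∀ v ∈ T, ¬ Mem3 v e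
  obtain ⟨M, hMQ, hM₁, hM₂, Ca, Cb, hC, hCM⟩ := Bipartite.konig (P.image fun e => (u e, w e))
  obtain ⟨F₀, hF₀P, hu₀, hw₀, hF₀⟩ := Bipartite.exists_lift_matching P u w hMQ hM₁ hM₂
  have hcover : ∀ e ∈ E, ∃ v ∈ T ∪ (Ca ∪ Cb), Mem3 v e := by
    intro e he
    by_cases hT : ∃ v ∈ T, Mem3 v e
    · obtain ⟨v, hv, hve⟩ := hT
      exact ⟨v, mem_union_left _ hv, hve⟩
    have heP : e ∈ P := mem_filter.2 ⟨mem_univ _, he, fun v hv hve => hT ⟨v, hv, hve⟩⟩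
    rcases hC _ (mem_image_of_mem _ heP) with h | h
    · exact ⟨u e, by simp [h], hu e⟩
    · exact ⟨w e, by simp [h], hw e⟩
  have hτ : coverNum3 E ≤ #T + #F₀ :=
    calc coverNum3 E ≤ #(T ∪ (Ca ∪ Cb)) := coverNum3_le_card hcover
      _ ≤ #T + (#Ca + #Cb) := (card_union_le _ _).trans (by grw [card_union_le])
      _ ≤ #T + #F₀ := by omega
  obtain ⟨F, hFF₀, hF⟩ := F₀.exists_subset_card_eq (show coverNum3 E - #T ≤ #F₀ by omega)
  have hFP : ∀ e ∈ F, e ∈ P := fun e he => hF₀P (hFF₀ he)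
  refine ⟨F, hF, fun e he => (mem_filter.1 (hFP e he)).2.1,
    fun e he => (mem_filter.1 (hFP e he)).2.2, hu₀.mono (coe_subset.2 hFF₀),
    hw₀.mono (coe_subset.2 hFF₀)⟩

end Hypergraph

theorem stmt_9_general {R B G : Type*} [Fintype R] [Fintype B] [Fintype G]
    (E : Set (R × B × G)) (T : Finset (R ⊕ B ⊕ G))
    (a : Fin 3) :
    ∃ F : Finset (R × B × G), F.card = coverNum3 E - T.card ∧ (↑F : Set _) ⊆ E ∧
      (∀ e ∈ F, ∀ v ∈ T, ¬ Mem3 v e) ∧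
      ∀ e ∈ F, ∀ f ∈ F, e ≠ f → OnlyIn a e f := by
  obtain ⟨F, hcard, hFE, hFT, hinj₁, hinj₂⟩ :=
    exists_matching_avoiding E T (mem3_edgeVertex (a + 1)) (mem3_edgeVertex (a + 2))
  exact ⟨F, hcard, hFE, hFT, fun e he f hf hne =>
    onlyIn_of_edgeVertex_ne (hinj₁.ne he hf hne) (hinj₂.ne he hf hne)⟩

theorem stmt_9 {R B G : Type*} [Fintype R] [Fintype B] [Fintype G]
    (E : Set (R × B × G)) (T : Finset (R ⊕ B ⊕ G)) (hT : T.card ≤ coverNum3 E)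
    (a : Fin 3) :
    ∃ F : Finset (R × B × G), F.card = coverNum3 E - T.card ∧ (↑F : Set _) ⊆ E ∧
      (∀ e ∈ F, ∀ v ∈ T, ¬ Mem3 v e) ∧
      ∀ e ∈ F, ∀ f ∈ F, e ≠ f → OnlyIn a e f :=
  stmt_9_general E T a
end

section
/- In a bipartite graph, the size of a largest matching equals the minimum size of a vertex cover. -/
open Finset

lemma konig_matching_le_cover {α β : Type*} [DecidableEq α] [DecidableEq β]
    (E M : Finset (α × β)) (hME : M ⊆ E)
    (hM : ∀ e ∈ M, ∀ f ∈ M, e ≠ f → e.1 ≠ f.1 ∧ e.2 ≠ f.2)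
    (S : Finset (α ⊕ β)) (hS : ∀ e ∈ E, Sum.inl e.1 ∈ S ∨ Sum.inr e.2 ∈ S) :
    M.card ≤ S.card := by
  apply Finset.card_le_card_of_injOn
    (fun e => if Sum.inl e.1 ∈ S then Sum.inl e.1 else Sum.inr e.2)
  · intro e he
    by_cases h : Sum.inl e.1 ∈ S
    · simp [h]
    · simp only [h, if_neg, if_false]
      rcases hS e (hME he) with h' | h'
      · exact absurd h' h
      · exact h'
  · intro e he f hf heq
    by_contra hne
    obtain ⟨h1, h2⟩ := hM e he f hf hne
    by_cases he1 : Sum.inl e.1 ∈ S <;> by_cases hf1 : Sum.inl f.1 ∈ S <;>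
      simp only [he1, hf1, if_pos, if_neg, if_true, if_false] at heq <;>
      simp_all

lemma konig_side {α β : Type*} [DecidableEq α] [DecidableEq β]
    (E : Finset (α × β)) (S : Finset (α ⊕ β)) (A : Finset α)
    (hA : ∀ a, a ∈ A ↔ Sum.inl a ∈ S)
    (hS : ∀ e ∈ E, Sum.inl e.1 ∈ S ∨ Sum.inr e.2 ∈ S)
    (hmin : ∀ T : Finset (α ⊕ β),
      (∀ e ∈ E, Sum.inl e.1 ∈ T ∨ Sum.inr e.2 ∈ T) → S.card ≤ T.card) :
    ∃ f : {x // x ∈ A} → β, Function.Injective f ∧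
      ∀ a : {x // x ∈ A}, ((a : α), f a) ∈ E ∧ Sum.inr (f a) ∉ S := by
  have hAL : A = S.toLeft := by ext x; simp [hA]
  set t : {x // x ∈ A} → Finset β :=
    fun a => (E.filter (fun e => e.1 = (a : α) ∧ Sum.inr e.2 ∉ S)).image Prod.snd with ht
  have hall : ∀ s : Finset {x // x ∈ A}, s.card ≤ (s.biUnion t).card := by
    intro s
    by_contra hlt
    push_neg at hlt
    set T : Finset (α ⊕ β) :=
      ((A \ s.image Subtype.val).image Sum.inl) ∪ (S.toRight.image Sum.inr)
        ∪ ((s.biUnion t).image Sum.inr) with hTdef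
    have hcover : ∀ e ∈ E, Sum.inl e.1 ∈ T ∨ Sum.inr e.2 ∈ T := by
      intro e he
      by_cases h2 : Sum.inr e.2 ∈ S
      · right
        simp only [hTdef, mem_union, mem_image]
        left; right
        exact ⟨e.2, by simpa using h2, rfl⟩
      · rcases hS e he with h1 | h1
        · by_cases hs : e.1 ∈ s.image Subtype.val
          · right
            simp only [mem_image] at hs
            obtain ⟨a, has, hav⟩ := hs
            have : e.2 ∈ t a := by
              simp only [ht, mem_image, mem_filter]
              exact ⟨e, ⟨he, hav.symm ▸ rfl, h2⟩, rfl⟩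
            simp only [hTdef, mem_union, mem_image]
            right
            exact ⟨e.2, Finset.mem_biUnion.2 ⟨a, has, this⟩, rfl⟩
          · left
            simp only [hTdef, mem_union, mem_image]
            left; left
            exact ⟨e.1, mem_sdiff.2 ⟨(hA e.1).2 h1, hs⟩, rfl⟩
        · exact absurd h1 h2
    have hTcard : T.card ≤ (A.card - s.card) + S.toRight.card + (s.biUnion t).card := by
      calc T.card ≤ (((A \ s.image Subtype.val).image Sum.inl) ∪ (S.toRight.image Sum.inr)).card
          + ((s.biUnion t).image Sum.inr).card := Finset.card_union_le _ _
        _ ≤ (((A \ s.image Subtype.val).image Sum.inl).card + (S.toRight.image Sum.inr).card)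
          + ((s.biUnion t).image Sum.inr).card := by
            gcongr; exact Finset.card_union_le _ _
        _ ≤ (A \ s.image Subtype.val).card + S.toRight.card + (s.biUnion t).card := by
            gcongr <;> exact Finset.card_image_le
        _ ≤ (A.card - s.card) + S.toRight.card + (s.biUnion t).card := by
            gcongr
            have : (s.image Subtype.val).card = s.card :=
              Finset.card_image_of_injective _ Subtype.val_injective
            have hsub : s.image Subtype.val ⊆ A := by
              intro x hx
              simp only [mem_image] at hx
              obtain ⟨a, _, rfl⟩ := hx
              exact a.2
            rw [Finset.card_sdiff_of_subset hsub, this]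
    have hScard : A.card + S.toRight.card = S.card := by
      rw [hAL]; exact Finset.card_toLeft_add_card_toRight
    have hsA : s.card ≤ A.card := by
      have := Finset.card_le_univ s
      simpa [Fintype.card_coe] using this
    have := hmin T hcover
    omega
  obtain ⟨f, hfinj, hf⟩ := (Finset.all_card_le_biUnion_card_iff_exists_injective t).1 hall
  refine ⟨f, hfinj, fun a : {x // x ∈ A} => ?_⟩
  have := hf a
  simp only [ht, mem_image, mem_filter] at this
  obtain ⟨e, ⟨heE, he1, he2⟩, he3⟩ := this
  have : e = ((a : α), f a) := Prod.ext he1 he3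
  exact ⟨this ▸ heE, he3 ▸ he2⟩

/-- König's theorem: in a (finite) bipartite graph, given by its edge set
`E ⊆ α × β` between the two sides `α` and `β`, the maximum size of a matching
(a set of pairwise disjoint edges) equals the minimum size of a vertex cover. -/
theorem stmt_10 {α β : Type*} [Fintype α] [Fintype β] (E : Finset (α × β)) :
    sSup {n | ∃ M ⊆ E, M.card = n ∧
        ∀ e ∈ M, ∀ f ∈ M, e ≠ f → e.1 ≠ f.1 ∧ e.2 ≠ f.2}
      = sInf {n | ∃ S : Finset (α ⊕ β), S.card = n ∧
          ∀ e ∈ E, Sum.inl e.1 ∈ S ∨ Sum.inr e.2 ∈ S} := by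
  classical
  set Mset := {n | ∃ M ⊆ E, M.card = n ∧
      ∀ e ∈ M, ∀ f ∈ M, e ≠ f → e.1 ≠ f.1 ∧ e.2 ≠ f.2} with hMset
  set Sset := {n | ∃ S : Finset (α ⊕ β), S.card = n ∧
      ∀ e ∈ E, Sum.inl e.1 ∈ S ∨ Sum.inr e.2 ∈ S} with hSset
  have hSne : Sset.Nonempty :=
    ⟨(Finset.univ : Finset (α ⊕ β)).card, Finset.univ, rfl,
      fun e _ => Or.inl (Finset.mem_univ _)⟩
  have hMne : Mset.Nonempty := ⟨0, ∅, Finset.empty_subset _, Finset.card_empty, by simp⟩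
  have hMbdd : BddAbove Mset := by
    refine ⟨E.card, fun n hn => ?_⟩
    obtain ⟨M, hME, hcard, _⟩ := hn
    exact hcard ▸ Finset.card_le_card hME
  -- minimal cover
  obtain ⟨S, hScard, hScover⟩ := Nat.sInf_mem hSne
  have hSmin : ∀ T : Finset (α ⊕ β),
      (∀ e ∈ E, Sum.inl e.1 ∈ T ∨ Sum.inr e.2 ∈ T) → S.card ≤ T.card := by
    intro T hT
    rw [hScard]
    exact Nat.sInf_le ⟨T, rfl, hT⟩
  -- maximum matching
  obtain ⟨M, hME, hMcard, hMmatch⟩ := Nat.sSup_mem hMne hMbdd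
  apply le_antisymm
  · rw [← hMcard, ← hScard]
    exact konig_matching_le_cover E M hME hMmatch S hScover
  -- need: sInf ≤ sSup, i.e. a matching of size S.card
  -- left side Hall
  obtain ⟨f, hfinj, hf⟩ := konig_side E S S.toLeft (fun a => by simp) hScover hSmin
  -- right side Hall via swapped graph
  set E' : Finset (β × α) := E.image Prod.swap with hE'
  set S' : Finset (β ⊕ α) := S.map (Equiv.sumComm α β).toEmbedding with hS'
  have hswapmem : ∀ (a : α) (b : β), (b, a) ∈ E' ↔ (a, b) ∈ E := by
    intro a b
    simp only [hE', Finset.mem_image, Prod.ext_iff]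
    constructor
    · rintro ⟨⟨x, y⟩, hxy, h1, h2⟩
      subst h1; subst h2; exact hxy
    · intro h
      exact ⟨(a, b), h, rfl, rfl⟩
  have hS'l : ∀ b : β, Sum.inl b ∈ S' ↔ Sum.inr b ∈ S := by
    intro b; simp [hS', Finset.mem_map_equiv]
  have hS'r : ∀ a : α, Sum.inr a ∈ S' ↔ Sum.inl a ∈ S := by
    intro a; simp [hS', Finset.mem_map_equiv]
  have hS'cover : ∀ e ∈ E', Sum.inl e.1 ∈ S' ∨ Sum.inr e.2 ∈ S' := by
    rintro ⟨b, a⟩ he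
    rcases hScover (a, b) ((hswapmem a b).1 he) with h | h
    · right; exact (hS'r a).2 h
    · left; exact (hS'l b).2 h
  have hS'min : ∀ T : Finset (β ⊕ α),
      (∀ e ∈ E', Sum.inl e.1 ∈ T ∨ Sum.inr e.2 ∈ T) → S'.card ≤ T.card := by
    intro T hT
    have hTc : ∀ e ∈ E, Sum.inl e.1 ∈ T.map (Equiv.sumComm β α).toEmbedding ∨
        Sum.inr e.2 ∈ T.map (Equiv.sumComm β α).toEmbedding := by
      rintro ⟨a, b⟩ he
      rcases hT (b, a) ((hswapmem a b).2 he) with h | h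
      · right; simpa [Finset.mem_map_equiv] using h
      · left; simpa [Finset.mem_map_equiv] using h
    calc S'.card = S.card := Finset.card_map _
      _ ≤ (T.map (Equiv.sumComm β α).toEmbedding).card := hSmin _ hTc
      _ = T.card := Finset.card_map _
  obtain ⟨g, hginj, hg⟩ := konig_side E' S' S.toRight
    (fun b => by simp [hS'l]) hS'cover hS'min
  -- build the matching
  set M1 : Finset (α × β) := S.toLeft.attach.image (fun a => (a.1, f a)) with hM1
  set M2 : Finset (α × β) := S.toRight.attach.image (fun b => (g b, b.1)) with hM2
  have hM1mem : ∀ e ∈ M1, ∃ a : {x // x ∈ S.toLeft}, e = ((a : α), f a) := by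
    intro e he
    simp only [hM1, Finset.mem_image, Finset.mem_attach, true_and] at he
    obtain ⟨a, ha⟩ := he
    exact ⟨a, ha.symm⟩
  have hM2mem : ∀ e ∈ M2, ∃ b : {x // x ∈ S.toRight}, e = (g b, (b : β)) := by
    intro e he
    simp only [hM2, Finset.mem_image, Finset.mem_attach, true_and] at he
    obtain ⟨b, hb⟩ := he
    exact ⟨b, hb.symm⟩
  have key1 : ∀ a : {x // x ∈ S.toLeft}, ((a : α), f a) ∈ E ∧ Sum.inr (f a) ∉ S :=
    fun a => hf a
  have key2 : ∀ b : {x // x ∈ S.toRight}, (g b, (b : β)) ∈ E ∧ Sum.inl (g b) ∉ S := by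
    intro b
    obtain ⟨h1, h2⟩ := hg b
    exact ⟨(hswapmem (g b) b).1 h1, fun h => h2 ((hS'r _).2 h)⟩
  have hdisj : Disjoint M1 M2 := by
    rw [Finset.disjoint_left]
    intro e he1 he2
    obtain ⟨a, rfl⟩ := hM1mem e he1
    obtain ⟨b, hb⟩ := hM2mem _ he2
    have h2 : f a = (b : β) := congrArg Prod.snd hb
    have : Sum.inr (f a) ∈ S := by
      rw [h2]; exact Finset.mem_toRight.1 b.2
    exact (key1 a).2 this
  have hM1card : M1.card = S.toLeft.card := by
    rw [hM1, Finset.card_image_of_injective, Finset.card_attach]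
    intro a a' h
    exact Subtype.ext (congrArg Prod.fst h)
  have hM2card : M2.card = S.toRight.card := by
    rw [hM2, Finset.card_image_of_injective, Finset.card_attach]
    intro b b' h
    exact Subtype.ext (congrArg Prod.snd h)
  have hMcard' : (M1 ∪ M2).card = S.card := by
    rw [Finset.card_union_of_disjoint hdisj, hM1card, hM2card,
      Finset.card_toLeft_add_card_toRight]
  have hsubE : M1 ∪ M2 ⊆ E := by
    intro e he
    rcases Finset.mem_union.1 he with h | h
    · obtain ⟨a, rfl⟩ := hM1mem e h; exact (key1 a).1
    · obtain ⟨b, rfl⟩ := hM2mem e h; exact (key2 b).1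
  have hmatch : ∀ e ∈ M1 ∪ M2, ∀ f' ∈ M1 ∪ M2, e ≠ f' → e.1 ≠ f'.1 ∧ e.2 ≠ f'.2 := by
    intro e he f' hf' hne
    rcases Finset.mem_union.1 he with h1 | h1 <;> rcases Finset.mem_union.1 hf' with h2 | h2
    · obtain ⟨a, rfl⟩ := hM1mem e h1
      obtain ⟨a', rfl⟩ := hM1mem f' h2
      have haa : a ≠ a' := fun h => hne (by rw [h])
      exact ⟨fun h => haa (Subtype.ext h), fun h => haa (hfinj h)⟩
    · obtain ⟨a, rfl⟩ := hM1mem e h1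
      obtain ⟨b, rfl⟩ := hM2mem f' h2
      constructor
      · intro h
        have h' : (a : α) = g b := h
        exact (key2 b).2 (by rw [← h']; exact Finset.mem_toLeft.1 a.2)
      · intro h
        have h' : f a = (b : β) := h
        exact (key1 a).2 (by rw [h']; exact Finset.mem_toRight.1 b.2)
    · obtain ⟨b, rfl⟩ := hM2mem e h1
      obtain ⟨a, rfl⟩ := hM1mem f' h2
      constructor
      · intro h
        have h' : (a : α) = g b := h.symm
        exact (key2 b).2 (by rw [← h']; exact Finset.mem_toLeft.1 a.2)
      · intro h
        have h' : f a = (b : β) := h.symm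
        exact (key1 a).2 (by rw [h']; exact Finset.mem_toRight.1 b.2)
    · obtain ⟨b, rfl⟩ := hM2mem e h1
      obtain ⟨b', rfl⟩ := hM2mem f' h2
      have hbb : b ≠ b' := fun h => hne (by rw [h])
      exact ⟨fun h => hbb (hginj h), fun h => hbb (Subtype.ext h)⟩
  calc sInf Sset = S.card := hScard.symm
    _ ≤ sSup Mset := le_csSup hMbdd ⟨M1 ∪ M2, hsubE, hMcard', hmatch⟩
end

section
/- Let H be an r-uniform hypergraph with cover number at least t. Then there exists a subhypergraph of H (a subset of its edges) with cover number exactly t and at most binomial(r + t − 1, r) edges. -/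
/-!
Take a subfamily `E'` of `E` that is minimal with `t ≤ τ(E')`. For each edge `e` of `E'`, the
family `E' \ {e}` has a cover `B e` with fewer than `t` vertices. It misses `e` (otherwise
`τ(E') < t`) and meets every other edge of `E'`, so the pairs `(e, B e)` form a Bollobás set-pair
system. The set-pair inequality `∑ 1 / C(|Aᵢ| + |Bᵢ|, |Aᵢ|) ≤ 1` then gives
`|E'| ≤ C(r + t - 1, r)`. The inequality is proved by induction on the ground set `X`: for each
`x ∈ X`, drop the pairs with `x ∈ Aᵢ` and delete `x` from every `Bᵢ`, then average the
resulting inequalities over `x ∈ X`.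
-/

/-- The cover number τ of a hypergraph with vertex type `V` and edge set `E`. -/
noncomputable def coverNum {V : Type*} (E : Finset (Finset V)) : ℕ :=
  sInf {n | ∃ S : Finset V, S.card = n ∧ ∀ e ∈ E, ∃ v ∈ S, v ∈ e}

open Finset

section SetPairs

variable {α ι : Type*} [DecidableEq α]

lemma choose_add_succ_mul_succ (a c : ℕ) :
    (a + (c + 1)).choose a * (c + 1) = (a + c + 1) * (a + c).choose a := by
  rw [Nat.choose_symm_add, ← add_assoc, Nat.choose_symm_add, Nat.add_one_mul_choose_eq]

lemma sum_inv_choose_card_erase {X A B : Finset α} (hA : A ⊆ X) (hB : B ⊆ X)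
    (hAB : Disjoint A B) (hB₀ : B.Nonempty) :
    ∑ x ∈ X with x ∉ A, ((#A + #(B.erase x)).choose #A : ℚ)⁻¹ = #X / (#A + #B).choose #A := by
  obtain ⟨c, hc⟩ : ∃ c, #B = c + 1 := Nat.exists_eq_succ_of_ne_zero hB₀.card_pos.ne'
  have hsplit : {x ∈ X | x ∉ A} = B ∪ X \ (A ∪ B) := by
    ext x
    have : x ∈ B → x ∉ A := fun h => disjoint_right.1 hAB h
    have : x ∈ B → x ∈ X := fun h => hB h
    simp only [mem_filter, mem_union, mem_sdiff]
    tauto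
  have hle : #A + #B ≤ #X := (card_union_of_disjoint hAB).symm.trans_le
    (card_le_card (union_subset hA hB))
  have hsumB : ∑ x ∈ B, ((#A + #(B.erase x)).choose #A : ℚ)⁻¹
      = (c + 1) * ((#A + c).choose #A : ℚ)⁻¹ := by
    rw [sum_congr rfl fun x hx => by rw [card_erase_of_mem hx, hc, Nat.add_sub_cancel],
      sum_const, hc, nsmul_eq_mul]
    push_cast; rfl
  have hsumRest : ∑ x ∈ X \ (A ∪ B), ((#A + #(B.erase x)).choose #A : ℚ)⁻¹
      = (#X - (#A + #B)) * ((#A + #B).choose #A : ℚ)⁻¹ := by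
    rw [sum_congr rfl fun x hx => by rw [erase_eq_of_notMem (by simp_all)], sum_const,
      card_sdiff_of_subset (union_subset hA hB), card_union_of_disjoint hAB, nsmul_eq_mul,
      Nat.cast_sub hle, Nat.cast_add]
  rw [hsplit, sum_union (disjoint_sdiff.mono_left subset_union_right), hsumB, hsumRest, hc]
  have key : (((#A + (c + 1)).choose #A * (c + 1) : ℕ) : ℚ)
      = ((#A + c + 1) * (#A + c).choose #A : ℕ) :=
    congrArg _ (choose_add_succ_mul_succ #A c)
  have h₁ : ((#A + c).choose #A : ℚ) ≠ 0 := by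
    exact_mod_cast (Nat.choose_pos (Nat.le_add_right _ _)).ne'
  have h₂ : ((#A + (c + 1)).choose #A : ℚ) ≠ 0 := by
    exact_mod_cast (Nat.choose_pos (Nat.le_add_right _ _)).ne'
  push_cast at key ⊢
  field_simp
  linear_combination key

theorem sum_inv_choose_le_one_of_subset (X : Finset α) (I : Finset ι)
    (A B : ι → Finset α) (hAX : ∀ i ∈ I, A i ⊆ X) (hBX : ∀ i ∈ I, B i ⊆ X)
    (hAB : ∀ i ∈ I, Disjoint (A i) (B i))
    (hcross : ∀ i ∈ I, ∀ j ∈ I, i ≠ j → ¬Disjoint (A i) (B j)) :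
    ∑ i ∈ I, ((#(A i) + #(B i)).choose #(A i) : ℚ)⁻¹ ≤ 1 := by
  induction X using Finset.strongInduction generalizing I B with
  | H X ih =>
  by_cases hB₀ : ∃ i ∈ I, B i = ∅
  · obtain ⟨i, hi, hBi⟩ := hB₀
    have hI : I = {i} := eq_singleton_iff_unique_mem.2
      ⟨hi, fun j hj => by_contra fun hji => hcross j hj i hi hji (by simp [hBi])⟩
    simp [hI, hBi]
  push Not at hB₀
  rcases I.eq_empty_or_nonempty with rfl | ⟨i₀, hi₀⟩
  · simp
  have hX : (0 : ℚ) < #X := by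
    exact_mod_cast ((hB₀ i₀ hi₀).mono (hBX i₀ hi₀)).card_pos
  have hdel : ∀ x ∈ X,
      ∑ i ∈ I with x ∉ A i, ((#(A i) + #((B i).erase x)).choose #(A i) : ℚ)⁻¹ ≤ 1 := by
    intro x hx
    refine ih _ (erase_ssubset hx) _ _ (fun i hi => ?_) (fun i hi => ?_) (fun i hi => ?_)
      (fun i hi j hj hij => ?_) <;> rw [mem_filter] at hi
    · exact subset_erase.2 ⟨hAX i hi.1, hi.2⟩
    · exact erase_subset_erase x (hBX i hi.1)
    · exact (hAB i hi.1).mono_right (erase_subset x _)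
    · rw [← disjoint_erase_comm, erase_eq_of_notMem hi.2]
      exact hcross i hi.1 j (mem_filter.1 hj).1 hij
  refine le_of_mul_le_mul_left ?_ hX
  calc (#X : ℚ) * ∑ i ∈ I, ((#(A i) + #(B i)).choose #(A i) : ℚ)⁻¹
      = ∑ i ∈ I, ∑ x ∈ X with x ∉ A i, ((#(A i) + #((B i).erase x)).choose #(A i) : ℚ)⁻¹ := by
        rw [mul_sum]
        refine sum_congr rfl fun i hi => ?_
        rw [sum_inv_choose_card_erase (hAX i hi) (hBX i hi) (hAB i hi) (hB₀ i hi),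
          div_eq_mul_inv]
    _ = ∑ x ∈ X, ∑ i ∈ I with x ∉ A i, ((#(A i) + #((B i).erase x)).choose #(A i) : ℚ)⁻¹ :=
        sum_comm' fun i x => by simp only [mem_filter]; tauto
    _ ≤ ∑ _x ∈ X, 1 := sum_le_sum hdel
    _ = #X * 1 := by simp

theorem sum_inv_choose_le_one (I : Finset ι) (A B : ι → Finset α)
    (hAB : ∀ i ∈ I, Disjoint (A i) (B i))
    (hcross : ∀ i ∈ I, ∀ j ∈ I, i ≠ j → ¬Disjoint (A i) (B j)) :
    ∑ i ∈ I, ((#(A i) + #(B i)).choose #(A i) : ℚ)⁻¹ ≤ 1 :=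
  sum_inv_choose_le_one_of_subset (I.biUnion fun i => A i ∪ B i) I A B
    (fun _ hi => subset_union_left.trans (subset_biUnion_of_mem (fun i => A i ∪ B i) hi))
    (fun _ hi => subset_union_right.trans (subset_biUnion_of_mem (fun i => A i ∪ B i) hi))
    hAB hcross

theorem card_le_choose_of_disjoint_pairs (I : Finset ι) (A B : ι → Finset α) {r s : ℕ}
    (hA : ∀ i ∈ I, #(A i) = r) (hB : ∀ i ∈ I, #(B i) ≤ s)
    (hAB : ∀ i ∈ I, Disjoint (A i) (B i))
    (hcross : ∀ i ∈ I, ∀ j ∈ I, i ≠ j → ¬Disjoint (A i) (B j)) :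
    #I ≤ (r + s).choose r := by
  have hpos : (0 : ℚ) < (r + s).choose r := by exact_mod_cast Nat.choose_pos (Nat.le_add_right r s)
  have hterm : ∀ i ∈ I, ((r + s).choose r : ℚ)⁻¹ ≤ ((#(A i) + #(B i)).choose #(A i) : ℚ)⁻¹ := by
    intro i hi
    rw [hA i hi]
    refine inv_anti₀ (by exact_mod_cast Nat.choose_pos (Nat.le_add_right _ _)) ?_
    exact_mod_cast Nat.choose_le_choose r (Nat.add_le_add_left (hB i hi) r)
  have := (card_nsmul_le_sum I _ _ hterm).trans (sum_inv_choose_le_one I A B hAB hcross)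
  rw [nsmul_eq_mul, ← div_eq_mul_inv, div_le_one hpos] at this
  exact_mod_cast this

end SetPairs

section Cover

variable {V : Type*} {E : Finset (Finset V)} {S : Finset V} {t : ℕ}

lemma coverNum_le_card (hS : ∀ e ∈ E, ∃ v ∈ S, v ∈ e) : coverNum E ≤ #S :=
  Nat.sInf_le ⟨S, rfl, hS⟩

@[simp]
lemma coverNum_empty : coverNum (∅ : Finset (Finset V)) = 0 :=
  Nat.eq_zero_of_le_zero (coverNum_le_card (S := ∅) (by simp))

lemma nonempty_of_mem_of_coverNum_pos (hE : 0 < coverNum E) {e : Finset V} (he : e ∈ E) :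
    e.Nonempty := by
  rw [nonempty_iff_ne_empty]
  rintro rfl
  have hno : {n | ∃ S : Finset V, #S = n ∧ ∀ e ∈ E, ∃ v ∈ S, v ∈ e} = ∅ :=
    Set.eq_empty_of_forall_notMem fun _ ⟨_, _, hS⟩ => by simpa using hS ∅ he
  simp [coverNum, hno] at hE

lemma exists_cover_card_lt (hE : ∀ e ∈ E, e.Nonempty) (h : coverNum E < t) :
    ∃ S : Finset V, #S < t ∧ ∀ e ∈ E, ∃ v ∈ S, v ∈ e := by
  classical
  obtain ⟨S, hS, hcov⟩ := Nat.sInf_mem (s := {n | ∃ S : Finset V, #S = n ∧ ∀ e ∈ E, ∃ v ∈ S, v ∈ e})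
    ⟨_, E.sup id, rfl, fun e he => (hE e he).imp fun v hv => ⟨le_sup (f := id) he hv, hv⟩⟩
  exact ⟨S, hS.trans_lt h, hcov⟩

variable [DecidableEq V]

lemma coverNum_le_card_insert {e : Finset V} (hS : ∀ f ∈ E.erase e, ∃ v ∈ S, v ∈ f) {v : V}
    (hv : v ∈ e) : coverNum E ≤ #(insert v S) :=
  coverNum_le_card fun f hf => if hfe : f = e then ⟨v, mem_insert_self v S, hfe ▸ hv⟩
    else (hS f (mem_erase.2 ⟨hfe, hf⟩)).imp fun _ hw => ⟨mem_insert_of_mem hw.1, hw.2⟩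

def IsCoverCritical (E : Finset (Finset V)) (t : ℕ) : Prop :=
  t ≤ coverNum E ∧ ∀ e ∈ E, coverNum (E.erase e) < t

lemma exists_isCoverCritical_subset (ht : t ≤ coverNum E) : ∃ E' ⊆ E, IsCoverCritical E' t := by
  obtain ⟨E', hmin⟩ :=
    exists_minimal (s := {F ∈ E.powerset | t ≤ coverNum F}) ⟨E, by simpa using ht⟩
  obtain ⟨hE'E, htE'⟩ : E' ⊆ E ∧ t ≤ coverNum E' := by simpa using hmin.1
  refine ⟨E', hE'E, htE', fun e he => not_le.1 fun hte => ?_⟩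
  have := hmin.2 (y := E'.erase e) (by simpa using ⟨(erase_subset e E').trans hE'E, hte⟩)
    (erase_subset e E')
  exact notMem_erase e E' (this he)

namespace IsCoverCritical

variable {e : Finset V}

lemma pos_of_mem (h : IsCoverCritical E t) (he : e ∈ E) : 0 < t :=
  (Nat.zero_le _).trans_lt (h.2 e he)

lemma nonempty_of_mem (h : IsCoverCritical E t) (he : e ∈ E) : e.Nonempty :=
  nonempty_of_mem_of_coverNum_pos ((h.pos_of_mem he).trans_le h.1) he

lemma exists_cover_erase (h : IsCoverCritical E t) (he : e ∈ E) :
    ∃ S : Finset V, #S < t ∧ ∀ f ∈ E.erase e, ∃ v ∈ S, v ∈ f :=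
  exists_cover_card_lt (fun _ hf => h.nonempty_of_mem (mem_of_mem_erase hf)) (h.2 e he)

lemma coverNum_eq (h : IsCoverCritical E t) : coverNum E = t := by
  rcases E.eq_empty_or_nonempty with rfl | ⟨e, he⟩
  · simpa using (Nat.le_zero.1 (h.1.trans_eq coverNum_empty)).symm
  obtain ⟨S, hS, hcov⟩ := h.exists_cover_erase he
  obtain ⟨v, hv⟩ := h.nonempty_of_mem he
  exact le_antisymm ((coverNum_le_card_insert hcov hv).trans
    ((card_insert_le v S).trans hS)) h.1

lemma card_le_choose {r : ℕ} (h : IsCoverCritical E t) (hu : ∀ e ∈ E, #e = r) :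
    #E ≤ (r + t - 1).choose r := by
  rcases E.eq_empty_or_nonempty with rfl | ⟨e₀, he₀⟩
  · simp
  choose! B hB hcov using fun e (he : e ∈ E) => h.exists_cover_erase he
  have hdisj : ∀ e ∈ E, Disjoint e (B e) := fun e he => disjoint_left.2 fun v hve hvB =>
    (hB e he).not_ge <| h.1.trans <| (coverNum_le_card_insert (hcov e he) hve).trans_eq
      (congrArg card (insert_eq_of_mem hvB))
  have hcross : ∀ e ∈ E, ∀ f ∈ E, e ≠ f → ¬Disjoint e (B f) := fun e he f hf hef =>
    not_disjoint_iff.2 <| (hcov f hf e (mem_erase.2 ⟨hef, he⟩)).imp fun _ hv => ⟨hv.2, hv.1⟩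
  rw [Nat.add_sub_assoc (h.pos_of_mem he₀)]
  exact card_le_choose_of_disjoint_pairs E id B hu (fun e he => Nat.le_sub_one_of_lt (hB e he))
    hdisj hcross

end IsCoverCritical

end Cover

theorem stmt_11_general {V : Type*} (r t : ℕ)
    (E : Finset (Finset V)) (hu : ∀ e ∈ E, e.card = r) (ht : t ≤ coverNum E) :
    ∃ E' ⊆ E, coverNum E' = t ∧ E'.card ≤ (r + t - 1).choose r := by
  classical
  obtain ⟨E', hE'E, hcrit⟩ := exists_isCoverCritical_subset ht
  exact ⟨E', hE'E, hcrit.coverNum_eq, hcrit.card_le_choose fun e he => hu e (hE'E he)⟩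

/-- Bollobás: an r-uniform hypergraph with cover number at least `t` has a
subhypergraph with cover number exactly `t` and at most `(r+t-1).choose r` edges. -/
theorem stmt_11 {V : Type*} [Fintype V] [DecidableEq V] (r t : ℕ)
    (E : Finset (Finset V)) (hu : ∀ e ∈ E, e.card = r) (ht : t ≤ coverNum E) :
    ∃ E' ⊆ E, coverNum E' = t ∧ E'.card ≤ (r + t - 1).choose r :=
  stmt_11_general r t E hu ht
end

section
/- Let G be a graph with an r-edge-colouring c such that τ(H(G,c)) ≥ s. Then there exists W ⊆ V(G) with |W| ≤ binomial(r−1+s, r) such that τ(H(G,W,c)) ≥ s. -/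
/-- The colour-`i` subgraph of `G` under the edge-colouring `c`. -/
def colourSub {V : Type*} {r : ℕ} (G : SimpleGraph V) (c : Sym2 V → Fin r)
    (i : Fin r) : SimpleGraph V where
  Adj u v := G.Adj u v ∧ c s(u, v) = i
  symm := by
    constructor
    intro u v h
    exact ⟨h.1.symm, by rw [Sym2.eq_swap]; exact h.2⟩
  loopless := by constructor; intro u h; exact G.irrefl h.1

/-- The edge `ed(u)` of the auxiliary hypergraph `H(G,c)`. -/
def edMap {V : Type*} {r : ℕ} (G : SimpleGraph V) (c : Sym2 V → Fin r) (u : V) :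
    (i : Fin r) → (colourSub G c i).ConnectedComponent :=
  fun i => (colourSub G c i).connectedComponentMk u

open Classical in
/-- The edge `ed(u)` of the auxiliary hypergraph `H(G,W,c)`: colour-`i`
components disjoint from `W` are collapsed to the vertex `v_i^*` (`none`). -/
noncomputable def edMapW {V : Type*} {r : ℕ} (G : SimpleGraph V)
    (c : Sym2 V → Fin r) (W : Set V) (u : V) :
    (i : Fin r) → Option ((colourSub G c i).ConnectedComponent) :=
  fun i =>
    if ∃ w ∈ W, (colourSub G c i).connectedComponentMk w
        = (colourSub G c i).connectedComponentMk u
    then some ((colourSub G c i).connectedComponentMk u) else none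

/-!
Take an inclusion-minimal set `J` of vertices whose edges `ed(u)` still have cover number at
least `s`. For `w ∈ J`, minimality yields a cover `T_w` of the other edges of `J` with fewer than
`s` vertices; it misses `ed(w)`, so the pairs `(ed(w), T_w)` are cross-intersecting and Bollobás's
set-pair inequality gives `|J| ≤ binomial(r-1+s, r)`. For `W := J` and `u ∈ W` every component of
`ed(u)` meets `W`, so `ed_W(u) = ed(u)`: deleting the vertices `v_i^*` from a cover of `H(G,W,c)`
leaves a cover of these edges, of size at least `s`.

Bollobás's inequality is proved in its weighted form `∑ 1 / binomial(|A_i|+|B_i|, |A_i|) ≤ 1`, by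
induction on the ground set `X`: for `x ∈ X`, the pairs `(A_i, B_i \ {x})` with `x ∉ A_i` form a
system on `X \ {x}`, and summing these inequalities over `x` gives `|X|` times the one for `X`.
-/

open Finset

theorem Nat.choose_add_le_choose_add {a b a' b' : ℕ} (ha : a' ≤ a) (hb : b' ≤ b) :
    (a' + b').choose a' ≤ (a + b).choose a :=
  calc (a' + b').choose a' ≤ (a' + b).choose a' := Nat.choose_le_choose _ (by omega)
    _ = (a' + b).choose b := Nat.choose_symm_add
    _ ≤ (a + b).choose b := Nat.choose_le_choose _ (by omega)
    _ = (a + b).choose a := Nat.choose_symm_add.symm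

section Bollobas

variable {α ι : Type*}

theorem card_mul_inv_choose_eq_sum_inv_choose_erase [DecidableEq α] {X A B : Finset α}
    (hAX : A ⊆ X) (hBX : B ⊆ X) (hAB : Disjoint A B) (hB : B.Nonempty) :
    (#X : ℚ) * ((#A + #B).choose #A : ℚ)⁻¹ =
      ∑ x ∈ X, if x ∉ A then ((#A + #(B.erase x)).choose #A : ℚ)⁻¹ else 0 := by
  set a := #A
  set b := #B
  have hb : 0 < b := hB.card_pos
  have sum_A : ∑ x ∈ A, (if x ∉ A then ((a + #(B.erase x)).choose a : ℚ)⁻¹ else 0) = 0 :=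
    sum_eq_zero fun x hx => if_neg (not_not.2 hx)
  have sum_B : ∑ x ∈ B, (if x ∉ A then ((a + #(B.erase x)).choose a : ℚ)⁻¹ else 0) =
      b * ((a + (b - 1)).choose a : ℚ)⁻¹ := by
    rw [sum_congr rfl fun x hx => by rw [if_pos (disjoint_right.1 hAB hx), card_erase_of_mem hx],
      sum_const, nsmul_eq_mul]
  have sum_rest : ∑ x ∈ X \ (A ∪ B), (if x ∉ A then ((a + #(B.erase x)).choose a : ℚ)⁻¹ else 0) =
      (#X - (a + b) : ℕ) * ((a + b).choose a : ℚ)⁻¹ := by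
    rw [sum_congr rfl fun x hx => ?_, sum_const, nsmul_eq_mul,
      card_sdiff_of_subset (union_subset hAX hBX), card_union_of_disjoint hAB]
    obtain ⟨-, hxAB⟩ := mem_sdiff.1 hx
    rw [if_pos fun hxA => hxAB (mem_union_left _ hxA),
      erase_eq_of_notMem fun hxB => hxAB (mem_union_right _ hxB)]
  have pascal : ((a + (b - 1)).choose a : ℚ) * (a + b) = (a + b).choose a * b := by
    have := Nat.choose_mul_succ_eq (a + (b - 1)) a
    rw [show a + (b - 1) + 1 = a + b by omega, show a + b - a = b by omega] at this
    exact_mod_cast this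
  have hXab : a + b ≤ #X := by
    rw [← card_union_of_disjoint hAB]; exact card_le_card (union_subset hAX hBX)
  rw [← sum_sdiff (union_subset hAX hBX), sum_union hAB, sum_A, sum_B, sum_rest,
    Nat.cast_sub hXab]
  have h1 : ((a + (b - 1)).choose a : ℚ) ≠ 0 := by exact_mod_cast (Nat.choose_pos (by omega)).ne'
  have h2 : ((a + b).choose a : ℚ) ≠ 0 := by exact_mod_cast (Nat.choose_pos (by omega)).ne'
  field_simp
  push_cast
  linear_combination pascal

theorem bollobas_sum_inv_choose_le_one (X : Finset α) (I : Finset ι) (A B : ι → Finset α)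
    (hAX : ∀ i ∈ I, A i ⊆ X) (hBX : ∀ i ∈ I, B i ⊆ X) (hdisj : ∀ i ∈ I, Disjoint (A i) (B i))
    (hcross : ∀ i ∈ I, ∀ j ∈ I, i ≠ j → ¬Disjoint (A i) (B j)) :
    ∑ i ∈ I, ((#(A i) + #(B i)).choose #(A i) : ℚ)⁻¹ ≤ 1 := by
  induction X using Finset.strongInduction generalizing I B with
  | H X ih =>
  classical
  by_cases hBne : ∀ i ∈ I, (B i).Nonempty
  swap
  · push Not at hBne
    obtain ⟨i₀, hi₀, hBi₀⟩ := hBne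
    have hI : I = {i₀} := eq_singleton_iff_unique_mem.2 ⟨hi₀, fun j hj => by
      by_contra hji
      exact hcross j hj i₀ hi₀ hji (by simp [hBi₀])⟩
    simp [hI, hBi₀]
  rcases I.eq_empty_or_nonempty with rfl | ⟨i₀, hi₀⟩
  · simp
  have hX : 0 < #X := card_pos.2 ((hBne i₀ hi₀).mono (hBX i₀ hi₀))
  have restrict (x : α) (hx : x ∈ X) :
      ∑ i ∈ I, (if x ∉ A i then ((#(A i) + #((B i).erase x)).choose #(A i) : ℚ)⁻¹ else 0) ≤ 1 := by
    rw [← sum_filter]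
    refine ih _ (erase_ssubset hx) _ _ (fun i hi => ?_) (fun i hi => ?_) (fun i hi => ?_)
      (fun i hi j hj hij => ?_)
    · exact subset_erase.2 ⟨hAX i (mem_filter.1 hi).1, (mem_filter.1 hi).2⟩
    · exact erase_subset_erase x (hBX i (mem_filter.1 hi).1)
    · exact (hdisj i (mem_filter.1 hi).1).mono_right (erase_subset _ _)
    · obtain ⟨y, hyA, hyB⟩ :=
        not_disjoint_iff.1 (hcross i (mem_filter.1 hi).1 j (mem_filter.1 hj).1 hij)
      have hyx : y ≠ x := fun h => (mem_filter.1 hi).2 (h ▸ hyA)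
      exact not_disjoint_iff.2 ⟨y, hyA, mem_erase.2 ⟨hyx, hyB⟩⟩
  have key : (#X : ℚ) * ∑ i ∈ I, ((#(A i) + #(B i)).choose #(A i) : ℚ)⁻¹ ≤ #X * 1 :=
    calc (#X : ℚ) * ∑ i ∈ I, ((#(A i) + #(B i)).choose #(A i) : ℚ)⁻¹
        = ∑ i ∈ I, ∑ x ∈ X,
            (if x ∉ A i then ((#(A i) + #((B i).erase x)).choose #(A i) : ℚ)⁻¹ else 0) := by
          rw [mul_sum]
          exact sum_congr rfl fun i hi => card_mul_inv_choose_eq_sum_inv_choose_erase (hAX i hi)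
            (hBX i hi) (hdisj i hi) (hBne i hi)
      _ = ∑ x ∈ X, ∑ i ∈ I,
            (if x ∉ A i then ((#(A i) + #((B i).erase x)).choose #(A i) : ℚ)⁻¹ else 0) := sum_comm
      _ ≤ ∑ x ∈ X, (1 : ℚ) := sum_le_sum restrict
      _ = #X * 1 := by simp
  exact le_of_mul_le_mul_left key (by exact_mod_cast hX)

theorem bollobas_card_le_choose (I : Finset ι) (A B : ι → Finset α) {a b : ℕ}
    (hA : ∀ i ∈ I, #(A i) ≤ a) (hB : ∀ i ∈ I, #(B i) ≤ b) (hdisj : ∀ i ∈ I, Disjoint (A i) (B i))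
    (hcross : ∀ i ∈ I, ∀ j ∈ I, i ≠ j → ¬Disjoint (A i) (B j)) :
    #I ≤ (a + b).choose a := by
  classical
  have hpos : (0 : ℚ) < (a + b).choose a := by exact_mod_cast Nat.choose_pos (by omega)
  have hsum := bollobas_sum_inv_choose_le_one (I.biUnion fun i => A i ∪ B i) I A B
    (fun i hi => subset_union_left.trans (subset_biUnion_of_mem (fun i => A i ∪ B i) hi))
    (fun i hi => subset_union_right.trans (subset_biUnion_of_mem (fun i => A i ∪ B i) hi))
    hdisj hcross
  have : (#I : ℚ) * ((a + b).choose a : ℚ)⁻¹ ≤ 1 := by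
    refine le_trans ?_ hsum
    rw [← nsmul_eq_mul, ← sum_const]
    exact sum_le_sum fun i hi => inv_anti₀ (by exact_mod_cast Nat.choose_pos (by omega))
      (by exact_mod_cast Nat.choose_add_le_choose_add (hA i hi) (hB i hi))
  rw [← div_eq_mul_inv, div_le_one hpos] at this
  exact_mod_cast this

end Bollobas

theorem exists_subset_card_le_choose_of_le_card_transversal {ι β : Type*}
    (e : ι → Finset β) (I : Finset ι) {r s : ℕ} (he : ∀ i ∈ I, #(e i) ≤ r)
    (hI : ∀ S : Finset β, (∀ i ∈ I, ¬Disjoint (e i) S) → s ≤ #S) :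
    ∃ J ⊆ I, #J ≤ (r - 1 + s).choose r ∧
      ∀ S : Finset β, (∀ i ∈ J, ¬Disjoint (e i) S) → s ≤ #S := by
  classical
  rcases Nat.eq_zero_or_pos s with rfl | hs
  · exact ⟨∅, empty_subset I, by simp, fun S _ => Nat.zero_le _⟩
  obtain ⟨J, hJI, hJ, hJmin⟩ := exists_minimal_le_of_wellFoundedLT
    (fun J : Finset ι => ∀ S : Finset β, (∀ i ∈ J, ¬Disjoint (e i) S) → s ≤ #S) I hI
  refine ⟨J, hJI, ?_, hJ⟩
  have hT : ∀ w ∈ J, ∃ T : Finset β, (∀ i ∈ J.erase w, ¬Disjoint (e i) T) ∧ #T < s := by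
    intro w hw
    by_contra! h
    exact (J.erase_ssubset hw).2 (hJmin (fun S hS => h S hS) (erase_subset w J))
  choose! T hTcov hTcard using hT
  have hdisj : ∀ w ∈ J, Disjoint (e w) (T w) := fun w hw => by
    by_contra h
    refine (hJ (T w) fun i hi => ?_).not_gt (hTcard w hw)
    by_cases hiw : i = w
    · exact hiw ▸ h
    · exact hTcov w hw i (mem_erase.2 ⟨hiw, hi⟩)
  calc #J ≤ (r + (s - 1)).choose r :=
        bollobas_card_le_choose J e T (fun i hi => he i (hJI hi))
          (fun w hw => Nat.le_sub_one_of_lt (hTcard w hw)) hdisj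
          (fun i hi j hj hij => hTcov j hj i (mem_erase.2 ⟨hij, hi⟩))
    _ ≤ (r - 1 + s).choose r := Nat.choose_le_choose r (by omega)

namespace Finset

variable {κ : Type*} {X : κ → Type*}

noncomputable def sigmaEraseNone (S : Finset ((i : κ) × Option (X i))) :
    Finset ((i : κ) × X i) :=
  S.preimage (Sigma.map id fun _ => some)
    (Function.injective_id.sigma_map fun i => Option.some_injective (X i)).injOn

theorem mem_sigmaEraseNone {S : Finset ((i : κ) × Option (X i))} {p : (i : κ) × X i} :
    p ∈ S.sigmaEraseNone ↔ (⟨p.1, some p.2⟩ : (i : κ) × Option (X i)) ∈ S :=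
  mem_preimage

theorem card_sigmaEraseNone_le (S : Finset ((i : κ) × Option (X i))) :
    #S.sigmaEraseNone ≤ #S := by
  classical
  rw [sigmaEraseNone, card_preimage]
  exact card_filter_le _ _

end Finset

theorem not_disjoint_sigma_singleton_iff {κ : Type*} [Fintype κ] {X : κ → Type*}
    (f : (i : κ) → X i) (S : Finset ((i : κ) × X i)) :
    ¬Disjoint (univ.sigma fun i => {f i}) S ↔ ∃ p ∈ S, f p.1 = p.2 := by
  simp [not_disjoint_iff, eq_comm]

theorem edMapW_of_mem {V : Type*} {r : ℕ} (G : SimpleGraph V) (c : Sym2 V → Fin r) {W : Set V}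
    {u : V} (hu : u ∈ W) (i : Fin r) : edMapW G c W u i = some (edMap G c u i) := by
  rw [edMapW, if_pos ⟨u, hu, rfl⟩]
  rfl

/-- If τ(H(G,c)) ≥ s, then there is a set `W` of at most `(r-1+s).choose r`
vertices of `G` with τ(H(G,W,c)) ≥ s. -/
theorem stmt_16 {V : Type*} [Fintype V] {r : ℕ} (G : SimpleGraph V)
    (c : Sym2 V → Fin r) (s : ℕ)
    (hs : s ≤ sInf {n | ∃ S : Finset ((i : Fin r) × (colourSub G c i).ConnectedComponent),
        S.card = n ∧ ∀ u : V, ∃ p ∈ S, edMap G c u p.1 = p.2}) :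
    ∃ W : Finset V, W.card ≤ (r - 1 + s).choose r ∧
      s ≤ sInf {n | ∃ S : Finset ((i : Fin r) × Option ((colourSub G c i).ConnectedComponent)),
        S.card = n ∧ ∀ u : V, ∃ p ∈ S, edMapW G c (↑W : Set V) u p.1 = p.2} := by
  classical
  obtain ⟨J, -, hJcard, hJ⟩ := exists_subset_card_le_choose_of_le_card_transversal
    (fun u => univ.sigma fun i => {edMap G c u i}) univ (r := r) (by simp)
    (fun S hS => hs.trans (Nat.sInf_le ⟨S, rfl, fun u =>
      (not_disjoint_sigma_singleton_iff _ S).1 (hS u (mem_univ u))⟩))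
  refine ⟨J, hJcard, ?_⟩
  rcases Nat.eq_zero_or_pos s with rfl | hs_pos
  · exact Nat.zero_le _
  obtain ⟨_, S₀, -, hS₀⟩ := Nat.nonempty_of_pos_sInf (hs_pos.trans_le hs)
  have : Fintype ((i : Fin r) × Option ((colourSub G c i).ConnectedComponent)) := .ofFinite _
  refine le_csInf ⟨_, univ, rfl, fun u => ?_⟩ ?_
  · obtain ⟨p, -⟩ := hS₀ u
    exact ⟨⟨p.1, edMapW G c J u p.1⟩, mem_univ _, rfl⟩
  rintro _ ⟨S, rfl, hS⟩
  refine (hJ S.sigmaEraseNone fun u hu => ?_).trans (card_sigmaEraseNone_le S)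
  obtain ⟨p, hpS, hp⟩ := hS u
  rw [edMapW_of_mem G c (mem_coe.2 hu)] at hp
  exact (not_disjoint_sigma_singleton_iff _ _).2
    ⟨⟨p.1, edMap G c u p.1⟩, mem_sigmaEraseNone.2 (by rwa [hp]), rfl⟩
end

section
/- Let G be a graph, H0 an r-partite r-uniform hypergraph, and ed0 : V(G) → E(H0) a surjective map such that ed0(u) ∩ ed0(v) ≠ ∅ whenever uv ∈ E(G). Then there exists an r-edge-colouring of G such that every cover of V(G) by monochromatic connected components uses at least τ(H0) components; in particular tc_r(G) ≥ τ(H0). -/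
/-!
Colour each edge `uv` of `G` by a coordinate `i` in which the hyperedges `ed0 u` and `ed0 v`
agree. Then `ed0 · i` is constant on every connected component of colour `i`, so a colour-`i`
component determines a vertex of the `i`-th part of `H0`. A cover of `V(G)` by monochromatic
components thus yields a set of vertices of `H0`, of at most the same size, meeting `ed0 u` for
every `u`; by surjectivity of `ed0` this is a vertex cover of `H0`.
-/

theorem SimpleGraph.Reachable.eq_of_forall_adj {V β : Type*} {H : SimpleGraph V} {g : V → β}
    (hg : ∀ u v, H.Adj u v → g u = g v) {u v : V} (h : H.Reachable u v) : g u = g v := by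
  obtain ⟨w⟩ := h
  induction w with
  | nil => rfl
  | cons hadj _ ih => exact (hg _ _ hadj).trans ih

section AgreementColouring

variable {V : Type*} {r : ℕ} {Vp : Fin r → Type*} (ed0 : V → (i : Fin r) → Vp i)

def agreeingCoords : Sym2 V → Set (Fin r) :=
  Sym2.lift ⟨fun u v => {i | ed0 u i = ed0 v i}, fun u v => by ext; exact eq_comm⟩

open Classical in
noncomputable def agreementColouring (hr : 1 ≤ r) (q : Sym2 V) : Fin r :=
  if h : (agreeingCoords ed0 q).Nonempty then h.some else ⟨0, hr⟩

variable {ed0} {G : SimpleGraph V}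

theorem agreementColouring_coord_eq (hr : 1 ≤ r)
    (hadj : ∀ u v, G.Adj u v → ∃ i, ed0 u i = ed0 v i) (u v : V) (h : G.Adj u v) :
    ed0 u (agreementColouring ed0 hr s(u, v)) = ed0 v (agreementColouring ed0 hr s(u, v)) := by
  have hne : (agreeingCoords ed0 s(u, v)).Nonempty := hadj u v h
  rw [agreementColouring, dif_pos hne]
  exact hne.some_mem

variable {c : Sym2 V → Fin r}

theorem colourSub_coord_eq_of_reachable
    (hc : ∀ u v, G.Adj u v → ed0 u (c s(u, v)) = ed0 v (c s(u, v)))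
    {i : Fin r} {u v : V} (h : (colourSub G c i).Reachable u v) : ed0 u i = ed0 v i :=
  h.eq_of_forall_adj fun u v (huv : (colourSub G c i).Adj u v) => huv.2 ▸ hc u v huv.1

noncomputable def componentCoord
    (hc : ∀ u v, G.Adj u v → ed0 u (c s(u, v)) = ed0 v (c s(u, v)))
    (p : (i : Fin r) × (colourSub G c i).ConnectedComponent) : (i : Fin r) × Vp i :=
  ⟨p.1, p.2.lift (ed0 · p.1) fun _ _ w _ => colourSub_coord_eq_of_reachable hc w.reachable⟩

theorem exists_coords_of_componentCover
    (hc : ∀ u v, G.Adj u v → ed0 u (c s(u, v)) = ed0 v (c s(u, v)))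
    (S : Finset ((i : Fin r) × (colourSub G c i).ConnectedComponent))
    (hS : ∀ v : V, ∃ p ∈ S, (colourSub G c p.1).connectedComponentMk v = p.2) :
    ∃ Y : Finset ((i : Fin r) × Vp i), Y.card ≤ S.card ∧
      ∀ u, ∃ p ∈ Y, ed0 u p.1 = p.2 := by
  classical
  refine ⟨S.image (componentCoord hc), Finset.card_image_le, fun u => ?_⟩
  obtain ⟨⟨i, C⟩, hCS, huC : (colourSub G c i).connectedComponentMk u = C⟩ := hS u
  subst huC
  exact ⟨_, Finset.mem_image_of_mem _ hCS, rfl⟩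

end AgreementColouring

theorem stmt_17_general {V : Type*} {r : ℕ} (hr : 1 ≤ r) (G : SimpleGraph V)
    {Vp : Fin r → Type*} (E0 : Set ((i : Fin r) → Vp i))
    (ed0 : V → ((i : Fin r) → Vp i))
    (hsurj : ∀ f ∈ E0, ∃ u, ed0 u = f)
    (hadj : ∀ u v, G.Adj u v → ∃ i, ed0 u i = ed0 v i) :
    ∃ c : Sym2 V → Fin r,
      ∀ S : Finset ((i : Fin r) × (colourSub G c i).ConnectedComponent),
        (∀ v : V, ∃ p ∈ S, (colourSub G c p.1).connectedComponentMk v = p.2) →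
        ∃ Y : Finset ((i : Fin r) × Vp i), Y.card ≤ S.card ∧
          ∀ f ∈ E0, ∃ p ∈ Y, f p.1 = p.2 := by
  refine ⟨agreementColouring ed0 hr, fun S hS => ?_⟩
  obtain ⟨Y, hYS, hY⟩ :=
    exists_coords_of_componentCover (agreementColouring_coord_eq hr hadj) S hS
  refine ⟨Y, hYS, fun f hf => ?_⟩
  obtain ⟨u, rfl⟩ := hsurj f hf
  exact hY u

/-- Given a graph `G`, an r-partite r-uniform hypergraph `H0` (with parts
`Vp i` and edge set `E0` of functions picking one vertex per part), and a
surjective map `ed0 : V(G) → E(H0)` with `ed0(u) ∩ ed0(v) ≠ ∅` whenever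
`uv ∈ E(G)`, there is an r-edge-colouring `c` of `G` such that every cover of
`V(G)` by monochromatic connected components uses at least `τ(H0)` components:
for any such cover `S` there is a vertex cover of `H0` of size at most `|S|`. -/
theorem stmt_17 {V : Type*} {r : ℕ} (hr : 1 ≤ r) (G : SimpleGraph V)
    {Vp : Fin r → Type*} (E0 : Set ((i : Fin r) → Vp i))
    (ed0 : V → ((i : Fin r) → Vp i))
    (hmem : ∀ u, ed0 u ∈ E0)
    (hsurj : ∀ f ∈ E0, ∃ u, ed0 u = f)
    (hadj : ∀ u v, G.Adj u v → ∃ i, ed0 u i = ed0 v i) :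
    ∃ c : Sym2 V → Fin r,
      ∀ S : Finset ((i : Fin r) × (colourSub G c i).ConnectedComponent),
        (∀ v : V, ∃ p ∈ S, (colourSub G c p.1).connectedComponentMk v = p.2) →
        ∃ Y : Finset ((i : Fin r) × Vp i), Y.card ≤ S.card ∧
          ∀ f ∈ E0, ∃ p ∈ Y, f p.1 = p.2 :=
  stmt_17_general hr G E0 ed0 hsurj hadj
end
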